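/- arXiv:1703.02939 — 7 statements merged into one kernel-verified Lean document; each statement's English description precedes it below -/
import Mathlib

section
/- Let p ≥ 2 and d ≥ 1 be integers and let H be a finite family of d-intervals with |H| ≥ p. If H satisfies the (p,p) property, then the fractional covering number satisfies τ*(H) < (p·d)^{1/(p-1)} + 1. -/
/-!
By LP duality, in the form of von Neumann's minimax theorem for the incidence matrix between the
members of `H` and the left endpoints of their intervals, `τ*(H)` is at most the largest fractional
matching of `H`. Any `p` members of `H` share a point, hence also the rightmost left endpoint of
the intervals through that point. Expanding `(∑ f)^p` over `p`-tuples and charging every tuple to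
such a common left endpoint of one of its members gives `(∑ f)^p ≤ p d ∑ f` for a fractional
matching `f`, that is, `∑ f ≤ (p d)^(1/(p-1))`.
-/

/-- A `d`-interval: a nonempty subset of `ℝ` that is a union of at most `d`
closed bounded intervals. -/
def IsDInterval (d : ℕ) (s : Set ℝ) : Prop :=
  s.Nonempty ∧ ∃ P : Finset (ℝ × ℝ), P.card ≤ d ∧ s = ⋃ I ∈ P, Set.Icc I.1 I.2

/-- A finite family `H` of sets satisfies the `(p,q)` property if among every
`p` distinct members of `H` some `q` have a point in common. -/
def HasPQProperty (H : Finset (Set ℝ)) (p q : ℕ) : Prop :=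
  ∀ S ⊆ H, S.card = p → ∃ T ⊆ S, T.card = q ∧ (⋂ h ∈ T, (h : Set ℝ)).Nonempty

/-- The fractional covering number `τ*(H)`: the infimum of total weights of
finitely supported fractional covers of `H`. -/
noncomputable def fracCoverNum (H : Finset (Set ℝ)) : ℝ :=
  sInf { t : ℝ | ∃ w : ℝ →₀ ℝ, (∀ x, 0 ≤ w x) ∧
    (∀ h ∈ H, 1 ≤ ∑ x ∈ w.support, Set.indicator h (fun y => w y) x) ∧
    t = ∑ x ∈ w.support, w x }

open Finset Matrix

/-- `ν*(H) ≤ c` for the fractional matching number, with loads tested only at the points of `E`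
and normalised by a bound `L` instead of `1`. -/
def FracMatchingBound (H : Finset (Set ℝ)) (E : Finset ℝ) (c : ℝ) : Prop :=
  open Classical in
  ∀ f : H → ℝ, (∀ h, 0 ≤ f h) → ∀ L, 0 ≤ L →
    (∀ e ∈ E, ∑ h : H with e ∈ h.1, f h ≤ L) → ∑ h, f h ≤ c * L

theorem Matrix.exists_isSaddlePointOn_stdSimplex {ι κ : Type*} [Fintype ι] [Fintype κ]
    [Nonempty ι] [Nonempty κ] (M : Matrix ι κ ℝ) :
    ∃ x ∈ stdSimplex ℝ ι, ∃ y ∈ stdSimplex ℝ κ,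
      IsSaddlePointOn (stdSimplex ℝ ι) (stdSimplex ℝ κ) (fun x y => x ⬝ᵥ (M *ᵥ y)) x y := by
  classical
  have hlin_left (y : κ → ℝ) :
      (fun x : ι → ℝ => x ⬝ᵥ (M *ᵥ y)) = (dotProductBilin ℝ ℝ).flip (M *ᵥ y) := rfl
  have hlin_right (x : ι → ℝ) :
      (fun y : κ → ℝ => x ⬝ᵥ (M *ᵥ y)) = dotProductBilin ℝ ℝ x ∘ₗ M.mulVecLin := rfl
  refine Sion.exists_isSaddlePointOn ⟨_, single_mem_stdSimplex ℝ (Classical.arbitrary ι)⟩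
    (convex_stdSimplex ℝ ι) (isCompact_stdSimplex ℝ ι) (fun y _ => ?_) (fun y _ => ?_)
    (convex_stdSimplex ℝ κ) ⟨_, single_mem_stdSimplex ℝ (Classical.arbitrary κ)⟩
    (isCompact_stdSimplex ℝ κ) (fun x _ => ?_) (fun x _ => ?_) <;>
    simp only [hlin_left, hlin_right]
  · exact (LinearMap.continuous_of_finiteDimensional _).lowerSemicontinuous.lowerSemicontinuousOn _
  · exact (LinearMap.convexOn _ (convex_stdSimplex ℝ ι)).quasiconvexOn
  · exact (LinearMap.continuous_of_finiteDimensional _).upperSemicontinuous.upperSemicontinuousOn _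
  · exact (LinearMap.concaveOn _ (convex_stdSimplex ℝ κ)).quasiconcaveOn

open Classical in
theorem fracCoverNum_le_sum {κ : Type*} [Fintype κ] (H : Finset (Set ℝ)) (x w : κ → ℝ)
    (hw : ∀ k, 0 ≤ w k) (hcover : ∀ h ∈ H, 1 ≤ ∑ k with x k ∈ h, w k) :
    fracCoverNum H ≤ ∑ k, w k := by
  let W : ℝ →₀ ℝ := ∑ k, Finsupp.single (x k) (w k)
  have hsum (G : ℝ → ℝ → ℝ) (hG₀ : ∀ y, G y 0 = 0) (hG : ∀ y u v, G y (u + v) = G y u + G y v) :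
      ∑ y ∈ W.support, G y (W y) = ∑ k, G (x k) (w k) := by
    show (∑ k, Finsupp.single (x k) (w k)).sum G = _
    exact (Finsupp.sum_finsetSum_index hG₀ hG).symm.trans
      (sum_congr rfl fun k _ => Finsupp.sum_single_index (hG₀ _))
  refine csInf_le ⟨0, ?_⟩ ⟨W, fun y => ?_, fun h hh => ?_, ?_⟩
  · rintro _ ⟨W', hW', -, rfl⟩
    exact sum_nonneg fun y _ => hW' y
  · rw [Finsupp.finsetSum_apply]
    exact sum_nonneg fun k _ => by rw [Finsupp.single_apply]; exact ite_nonneg (hw k) le_rfl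
  · calc 1 ≤ ∑ k with x k ∈ h, w k := hcover h hh
      _ = ∑ k, if x k ∈ h then w k else 0 := sum_filter _ _
      _ = _ := (hsum (fun y v => if y ∈ h then v else 0) (fun _ => ite_self 0)
          fun y u v => by split_ifs <;> simp).symm
  · exact (hsum (fun _ v => v) (fun _ => rfl) (fun _ _ _ => rfl)).symm

open Classical in
theorem fracCoverNum_le_of_fracMatchingBound {H : Finset (Set ℝ)} (hH : H.Nonempty)
    {E : Finset ℝ} {c : ℝ} (hmatch : FracMatchingBound H E c) : fracCoverNum H ≤ c := by
  have : Nonempty H := hH.coe_sort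
  have : Nonempty E := by
    refine (E.eq_empty_or_nonempty.resolve_left fun hE => ?_).coe_sort
    have := hmatch (fun _ => 1) (fun _ => zero_le_one) 0 le_rfl (by simp [hE])
    simp only [sum_const, card_univ, nsmul_eq_mul, mul_one, mul_zero] at this
    exact this.not_gt (by simpa using hH)
  let M : Matrix H E ℝ := Matrix.of fun h e => if e.1 ∈ h.1 then 1 else 0
  obtain ⟨a, ⟨ha₀, ha₁⟩, b, ⟨hb₀, hb₁⟩, hab⟩ := M.exists_isSaddlePointOn_stdSimplex
  set v := a ⬝ᵥ (M *ᵥ b)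
  have hload (e : E) : ∑ h : H with e.1 ∈ h.1, a h ≤ v := by
    refine le_of_eq_of_le ?_ (hab a ⟨ha₀, ha₁⟩ _ (single_mem_stdSimplex ℝ e))
    simp [M, dotProduct, sum_filter]
  have hcover (h : H) : v ≤ ∑ e : E with e.1 ∈ h.1, b e := by
    refine le_of_le_of_eq (hab _ (single_mem_stdSimplex ℝ h) b ⟨hb₀, hb₁⟩) ?_
    dsimp only
    rw [single_one_dotProduct]
    simp [M, mulVec, dotProduct, sum_filter]
  have hv₀ : 0 ≤ v := (sum_nonneg fun h _ => ha₀ h).trans (hload (Classical.arbitrary E))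
  have hv : 1 ≤ c * v := by
    rw [← ha₁]
    exact hmatch a ha₀ v hv₀ fun e he => hload ⟨e, he⟩
  have hc : 0 ≤ c := by nlinarith
  calc fracCoverNum H ≤ ∑ e : E, c * b e :=
        fracCoverNum_le_sum H Subtype.val (fun e => c * b e) (fun e => mul_nonneg hc (hb₀ e))
          fun h hh => by
            rw [← mul_sum]
            exact hv.trans (mul_le_mul_of_nonneg_left (hcover ⟨h, hh⟩) hc)
    _ = c := by rw [← mul_sum, hb₁, mul_one]

theorem le_rpow_inv_mul_of_pow_succ_le {t c L : ℝ} {n : ℕ} (ht : 0 ≤ t) (hc : 0 ≤ c)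
    (hL : 0 ≤ L) (hn : n ≠ 0) (h : t ^ (n + 1) ≤ c * t * L ^ n) : t ≤ c ^ (n⁻¹ : ℝ) * L := by
  rcases ht.eq_or_lt with rfl | ht
  · positivity
  have hpow : t ^ n ≤ c * L ^ n := by
    rw [pow_succ, mul_right_comm] at h
    exact le_of_mul_le_mul_right h ht
  calc t = (t ^ n) ^ (n⁻¹ : ℝ) := (Real.pow_rpow_inv_natCast ht.le hn).symm
    _ ≤ (c * L ^ n) ^ (n⁻¹ : ℝ) := by gcongr
    _ = c ^ (n⁻¹ : ℝ) * L := by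
      rw [Real.mul_rpow hc (by positivity), Real.pow_rpow_inv_natCast hL hn]

open Classical in
theorem sum_pow_succ_le_of_exists_anchor {α ι : Type*} [Fintype ι] {F : ι → Set α}
    {ℓ : ι → Finset α} {n d : ℕ} (hℓ : ∀ i, #(ℓ i) ≤ d)
    (hanchor : ∀ g : Fin (n + 1) → ι, ∃ k, ∃ e ∈ ℓ (g k), ∀ j, e ∈ F (g j))
    {f : ι → ℝ} (hf : ∀ i, 0 ≤ f i) {L : ℝ} (hL : 0 ≤ L)
    (hload : ∀ i, ∀ e ∈ ℓ i, ∑ j with e ∈ F j, f j ≤ L) :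
    (∑ i, f i) ^ (n + 1) ≤ (n + 1) * d * (∑ i, f i) * L ^ n := by
  set E := univ.biUnion ℓ
  set t := ∑ i, f i
  let A (e : α) (i : ι) : ℝ := if e ∈ ℓ i then f i else 0
  let B (e : α) (i : ι) : ℝ := if e ∈ F i then f i else 0
  -- the weight of a tuple charged to its `k`-th member being anchored at `e`
  let φ (k : Fin (n + 1)) (e : α) (j : Fin (n + 1)) (i : ι) : ℝ := if j = k then A e i else B e i
  have hA (e : α) (i : ι) : 0 ≤ A e i := ite_nonneg (hf i) le_rfl
  have hB (e : α) (i : ι) : 0 ≤ B e i := ite_nonneg (hf i) le_rfl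
  have hφ (k : Fin (n + 1)) (e : α) (j : Fin (n + 1)) (i : ι) : 0 ≤ φ k e j i :=
    ite_nonneg (hA e i) (hB e i)
  have hcharge (g : Fin (n + 1) → ι) :
      ∏ j, f (g j) ≤ ∑ k, ∑ e ∈ E, ∏ j, φ k e j (g j) := by
    obtain ⟨k, e, he, hall⟩ := hanchor g
    have heE : e ∈ E := mem_biUnion.2 ⟨g k, mem_univ _, he⟩
    calc ∏ j, f (g j) = ∏ j, φ k e j (g j) := by
          refine prod_congr rfl fun j _ => ?_
          by_cases hj : j = k
          · subst hj; simp [φ, A, he]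
          · simp [φ, B, hj, hall j]
      _ ≤ ∑ e ∈ E, ∏ j, φ k e j (g j) :=
          single_le_sum (f := fun e => ∏ j, φ k e j (g j))
            (fun e _ => prod_nonneg fun j _ => hφ _ _ _ _) heE
      _ ≤ _ := single_le_sum (f := fun k => ∑ e ∈ E, ∏ j, φ k e j (g j))
          (fun k _ => sum_nonneg fun e _ => prod_nonneg fun j _ => hφ _ _ _ _) (mem_univ k)
  have hfactor (k : Fin (n + 1)) (e : α) :
      ∑ g : Fin (n + 1) → ι, ∏ j, φ k e j (g j) = (∑ i, A e i) * (∑ i, B e i) ^ n := by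
    rw [← Fintype.prod_sum, ← mul_prod_erase univ _ (mem_univ k),
      prod_congr rfl (g := fun _ => ∑ i, B e i), prod_const, card_erase_of_mem (mem_univ k),
      card_univ, Fintype.card_fin, add_tsub_cancel_right]
    · simp [φ]
    · intro j hj
      simp [φ, ne_of_mem_erase hj]
  have hanchored : ∑ e ∈ E, ∑ i, A e i ≤ d * t := by
    rw [sum_comm, mul_sum]
    refine sum_le_sum fun i _ => ?_
    rw [sum_ite_mem, inter_eq_right.2 (subset_biUnion_of_mem ℓ (mem_univ i)), sum_const,
      nsmul_eq_mul]
    exact mul_le_mul_of_nonneg_right (by exact_mod_cast hℓ i) (hf i)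
  calc t ^ (n + 1) = ∑ g : Fin (n + 1) → ι, ∏ j, f (g j) := Fintype.sum_pow f (n + 1)
    _ ≤ ∑ g : Fin (n + 1) → ι, ∑ k, ∑ e ∈ E, ∏ j, φ k e j (g j) :=
      sum_le_sum fun g _ => hcharge g
    _ = ∑ k, ∑ e ∈ E, (∑ i, A e i) * (∑ i, B e i) ^ n := by
      rw [sum_comm]
      simp_rw [sum_comm (s := univ (α := Fin (n + 1) → ι)), hfactor]
      rfl
    _ ≤ ∑ k : Fin (n + 1), ∑ e ∈ E, (∑ i, A e i) * L ^ n := by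
      gcongr with k _ e he
      · exact sum_nonneg fun i _ => hA e i
      · exact sum_nonneg fun i _ => hB e i
      · obtain ⟨i, -, hi⟩ := mem_biUnion.1 he
        rw [← sum_filter]
        exact hload i e hi
    _ = (n + 1) * (∑ e ∈ E, ∑ i, A e i) * L ^ n := by
      rw [← sum_mul, sum_const, card_univ, Fintype.card_fin, nsmul_eq_mul]
      push_cast
      ring
    _ ≤ (n + 1) * (d * t) * L ^ n := by gcongr
    _ = _ := by ring

theorem exists_fst_mem_of_forall_mem_biUnion_Icc {ι : Type*} [Finite ι] [Nonempty ι]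
    {P : ι → Finset (ℝ × ℝ)} {x : ℝ} (hx : ∀ i, x ∈ ⋃ I ∈ P i, Set.Icc I.1 I.2) :
    ∃ i, ∃ I ∈ P i, ∀ j, I.1 ∈ ⋃ J ∈ P j, Set.Icc J.1 J.2 := by
  simp only [Set.mem_iUnion₂] at hx ⊢
  choose I hIP hxI using hx
  obtain ⟨i, hi⟩ := Finite.exists_max fun i => (I i).1
  exact ⟨i, I i, hIP i, fun j => ⟨I j, hIP j, hi j, (hxI i).1.trans (hxI j).2⟩⟩

theorem HasPQProperty.exists_mem_forall {H : Finset (Set ℝ)} {p : ℕ}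
    (hprop : HasPQProperty H p p) (hcard : p ≤ #H) {κ : Type*} [Fintype κ]
    (hκ : Fintype.card κ ≤ p) (g : κ → H) : ∃ x, ∀ k, x ∈ (g k : Set ℝ) := by
  classical
  let T := univ.image fun k => (g k : Set ℝ)
  have hTH : T ⊆ H := by
    simp only [T, image_subset_iff]
    exact fun k _ => (g k).2
  obtain ⟨S, hTS, hSH, hS⟩ := exists_subsuperset_card_eq hTH (card_image_le.trans hκ) hcard
  obtain ⟨S', hS'S, hS', x, hx⟩ := hprop S hSH hS
  rw [eq_of_subset_of_card_le hS'S (hS.trans hS'.symm).le, Set.mem_iInter₂] at hx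
  exact ⟨x, fun k => hx _ (hTS (mem_image_of_mem _ (mem_univ k)))⟩

theorem HasPQProperty.exists_fracMatchingBound {p d : ℕ} (hp : 2 ≤ p) {H : Finset (Set ℝ)}
    (hH : ∀ s ∈ H, IsDInterval d s) (hcard : p ≤ #H) (hprop : HasPQProperty H p p) :
    ∃ E, FracMatchingBound H E (((p : ℝ) * d) ^ (1 / ((p : ℝ) - 1))) := by
  classical
  obtain ⟨n, rfl⟩ : ∃ n, p = n + 1 := ⟨p - 1, by omega⟩
  choose P hPcard hP using fun h : H => (hH h h.2).2
  let ℓ (h : H) : Finset ℝ := (P h).image Prod.fst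
  refine ⟨univ.biUnion ℓ, fun f hf L hL hload => ?_⟩
  have hanchor (g : Fin (n + 1) → H) : ∃ k, ∃ e ∈ ℓ (g k), ∀ j, e ∈ (g j : Set ℝ) := by
    obtain ⟨x, hx⟩ := hprop.exists_mem_forall hcard (by simp) g
    simp only [hP] at hx ⊢
    obtain ⟨k, I, hI, hIall⟩ := exists_fst_mem_of_forall_mem_biUnion_Icc hx
    exact ⟨k, I.1, mem_image_of_mem _ hI, hIall⟩
  have hpow := sum_pow_succ_le_of_exists_anchor (fun h => card_image_le.trans (hPcard h))
    hanchor hf hL fun h e he => hload e (mem_biUnion.2 ⟨h, mem_univ _, he⟩)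
  have hexp : 1 / (((n + 1 : ℕ) : ℝ) - 1) = (n : ℝ)⁻¹ := by push_cast; ring
  rw [hexp]
  push_cast
  exact le_rpow_inv_mul_of_pow_succ_le (sum_nonneg fun h _ => hf h) (by positivity) hL
    (by omega) hpow

theorem fracCover_of_pp_property_general (p d : ℕ) (hp : 2 ≤ p)
    (H : Finset (Set ℝ)) (hH : ∀ s ∈ H, IsDInterval d s) (hcard : p ≤ H.card)
    (hprop : HasPQProperty H p p) :
    fracCoverNum H < ((p : ℝ) * d) ^ (1 / ((p : ℝ) - 1)) + 1 := by
  obtain ⟨E, hE⟩ := hprop.exists_fracMatchingBound hp hH hcard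
  exact (fracCoverNum_le_of_fracMatchingBound (card_pos.1 (by omega)) hE).trans_lt
    (lt_add_one _)

theorem fracCover_of_pp_property (p d : ℕ) (hp : 2 ≤ p) (hd : 1 ≤ d)
    (H : Finset (Set ℝ)) (hH : ∀ s ∈ H, IsDInterval d s) (hcard : p ≤ H.card)
    (hprop : HasPQProperty H p p) :
    fracCoverNum H < ((p : ℝ) * d) ^ (1 / ((p : ℝ) - 1)) + 1 :=
  fracCover_of_pp_property_general p d hp H hH hcard hprop
end

section
/- Let p ≥ 2 and d ≥ 1 be integers and let H be a finite family of d-intervals with |H| ≥ p. If H satisfies the (p,p) property, then the covering number satisfies τ(H) < p^{1/(p-1)} · d^{p/(p-1)} + d. -/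
/-- The covering number `τ(H)`: the minimum cardinality of a finite set of
points meeting every member of `H`. -/
noncomputable def coverNum (H : Finset (Set ℝ)) : ℕ :=
  sInf { n : ℕ | ∃ C : Finset ℝ, C.card = n ∧ ∀ h ∈ H, ∃ x ∈ C, x ∈ h }

/-!
By the `(p,p)` property any `p` members of `H` share a point `z`, and the largest left endpoint
among the pieces containing `z` lies in all of them, so every `p`-tuple of members has a common
point that is a left endpoint of one of them. Counting `p`-tuples through
these at most `d` endpoints per member shows that a fractional packing of total weight `t`,
constrained only at left endpoints, satisfies `t ^ p ≤ p d t`, i.e. `t ≤ (p d) ^ (1 / (p - 1))`.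
LP duality turns this into a fractional cover of the same weight carried by left endpoints. Each
member then has a piece of weight at least `1 / d`, and piercing these pieces greedily from the
left costs at most `d` points per unit of weight.
-/

open Finset Matrix
open scoped Classical

theorem Finset.sum_le_sum_sum_filter_of_forall_exists {α β : Type*} {s : Finset α}
    {T : Finset β} {P : β → α → Prop} [∀ t, DecidablePred (P t)] {f : α → ℝ}
    (hf : ∀ a ∈ s, 0 ≤ f a) (hP : ∀ a ∈ s, ∃ t ∈ T, P t a) :
    ∑ a ∈ s, f a ≤ ∑ t ∈ T, ∑ a ∈ s with P t a, f a := by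
  calc ∑ a ∈ s, f a ≤ ∑ a ∈ s, ∑ t ∈ T with P t a, f a := sum_le_sum fun a ha => by
        obtain ⟨t, ht, hPt⟩ := hP a ha
        exact single_le_sum (f := fun _ => f a) (fun _ _ => hf a ha) (mem_filter.2 ⟨ht, hPt⟩)
    _ = ∑ t ∈ T, ∑ a ∈ s with P t a, f a := by simp only [sum_filter]; exact sum_comm

theorem Matrix.exists_cover_of_packing_sum_le {κ ι : Type*} [Fintype κ] [Fintype ι]
    (A : Matrix κ ι ℝ) {c : ℝ} (hc : 0 < c)
    (h : ∀ y : ι → ℝ, 0 ≤ y → A *ᵥ y ≤ 1 → ∑ i, y i ≤ c) :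
    ∃ w : κ → ℝ, 0 ≤ w ∧ 1 ≤ w ᵥ* A ∧ ∑ k, w k ≤ c := by
  by_contra hno
  set W : Set (κ → ℝ) := {w | 0 ≤ w ∧ ∑ k, w k ≤ c}
  have hWconv : Convex ℝ W :=
    (convex_Ici 0).inter <| convex_halfSpace_le
      ⟨fun _ _ => sum_add_distrib, fun _ _ => (mul_sum _ _ _).symm⟩ c
  have hWcpt : IsCompact W := by
    refine (isCompact_Icc (a := 0) (b := fun _ => c)).of_isClosed_subset
      ((isClosed_le continuous_const continuous_id).inter
        (isClosed_le (continuous_finsetSum _ fun k _ => continuous_apply k) continuous_const))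
      fun w hw => ⟨hw.1, fun k => (single_le_sum (fun k _ => hw.1 k) (mem_univ k)).trans hw.2⟩
  have hdisj : Disjoint (A.vecMulLinear '' W) (Set.Ici 1) := by
    rw [Set.disjoint_left]
    rintro _ ⟨w, hw, rfl⟩ hcov
    exact hno ⟨w, hw.1, hcov, hw.2⟩
  obtain ⟨f, u, v, hfW, huv, hfQ⟩ := geometric_hahn_banach_compact_closed
    (hWconv.linear_image _) (hWcpt.image A.vecMulLinear.continuous_of_finiteDimensional)
    (convex_Ici 1) isClosed_Ici hdisj
  set y : ι → ℝ := fun i => f fun j => if i = j then 1 else 0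
  have hf : ∀ z, f z = z ⬝ᵥ y := fun z => (f : (ι → ℝ) →ₗ[ℝ] ℝ).pi_apply_eq_sum_univ z
  have hv : v < ∑ i, y i := by simpa [hf, dotProduct] using hfQ 1 (Set.mem_Ici.2 le_rfl)
  -- `f` is bounded below on the upward closed set `Ici 1`, so its coefficients are nonnegative.
  have hy : 0 ≤ y := by
    intro i
    by_contra! hyi
    change y i < 0 at hyi
    have := hfQ (1 + Pi.single i ((∑ j, y j - v) / -y i)) <| Set.mem_Ici.2 <|
      le_add_of_nonneg_right <| Pi.single_nonneg.2 <| div_nonneg (by linarith) (by linarith)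
    rw [hf, add_dotProduct, single_dotProduct, div_neg, neg_mul, div_mul_cancel₀ _ hyi.ne,
      one_dotProduct] at this
    linarith
  have hfA : ∀ w, f (w ᵥ* A) = w ⬝ᵥ (A *ᵥ y) := fun w => by rw [hf, dotProduct_mulVec]
  have hu : 0 < u := by simpa [hfA] using hfW 0 ⟨0, ⟨le_rfl, by simpa using hc.le⟩, by simp⟩
  -- Scaled by `c / u`, the coefficients of the separating functional form a packing of weight
  -- `c * ∑ i, y i / u > c`.
  have hpacking : A *ᵥ ((c / u) • y) ≤ 1 := fun k => by
    have := hfW _ ⟨Pi.single k c, ⟨Pi.single_nonneg.2 hc.le, by simp⟩, rfl⟩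
    simp only [vecMulLinear_apply, hfA, single_dotProduct] at this
    simp only [mulVec_smul, Pi.smul_apply, smul_eq_mul, Pi.one_apply]
    rw [div_mul_eq_mul_div, div_le_one hu]
    exact this.le
  have hsum := h _ (smul_nonneg (div_pos hc hu).le hy) hpacking
  simp only [Pi.smul_apply, smul_eq_mul, ← mul_sum] at hsum
  rw [div_mul_eq_mul_div, div_le_iff₀ hu] at hsum
  linarith [le_of_mul_le_mul_left hsum hc]

theorem exists_fractional_cover_of_packing_le {α : Type*} (X : Finset α) (H : Finset (Set α))
    {c : ℝ} (hc : 0 < c)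
    (h : ∀ y : Set α → ℝ, (∀ s ∈ H, 0 ≤ y s) → (∀ x ∈ X, ∑ s ∈ H with x ∈ s, y s ≤ 1) →
      ∑ s ∈ H, y s ≤ c) :
    ∃ w : α → ℝ, (∀ x ∈ X, 0 ≤ w x) ∧ (∀ s ∈ H, 1 ≤ ∑ x ∈ X with x ∈ s, w x) ∧
      ∑ x ∈ X, w x ≤ c := by
  let A : Matrix X H ℝ := of fun x s => if (x : α) ∈ (s : Set α) then 1 else 0
  obtain ⟨w, hw0, hwA, hwc⟩ := A.exists_cover_of_packing_sum_le hc fun y hy hAy => by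
    let y' := Function.extend ((↑) : H → Set α) y 0
    have hy' : ∀ s : H, y' s = y s := Subtype.val_injective.extend_apply y 0
    have := h y' (fun s hs => (hy _).trans (hy' ⟨s, hs⟩).ge) fun x hx => by
      simpa [A, mulVec, dotProduct, sum_filter, ← sum_coe_sort H, hy'] using hAy ⟨x, hx⟩
    simpa [← sum_coe_sort H, hy'] using this
  let w' := Function.extend ((↑) : X → α) w 0
  have hw' : ∀ x : X, w' x = w x := Subtype.val_injective.extend_apply w 0
  refine ⟨w', fun x hx => (hw0 _).trans (hw' ⟨x, hx⟩).ge, fun s hs => ?_, ?_⟩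
  · simpa [A, vecMul, dotProduct, sum_filter, ← sum_coe_sort X, hw'] using hwA ⟨s, hs⟩
  · simpa [← sum_coe_sort X, hw'] using hwc

theorem sum_prod_le_sum_filter {α ι : Type*} [Fintype ι] [DecidableEq ι] {H : Finset (Set α)}
    {y : Set α → ℝ} (hy : ∀ s ∈ H, 0 ≤ y s) {x : α} (hx : ∑ s ∈ H with x ∈ s, y s ≤ 1)
    {Q : Set α → Prop} [DecidablePred Q] {j : ι} {G : Finset (ι → Set α)}
    (hG : ∀ g ∈ G, (∀ i, g i ∈ H ∧ x ∈ g i) ∧ Q (g j)) :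
    ∑ g ∈ G, ∏ i, y (g i) ≤ ∑ s ∈ H with Q s, y s := by
  let T : ι → Finset (Set α) := fun i => if i = j then {s ∈ H | Q s} else {s ∈ H | x ∈ s}
  have hTH : ∀ i, T i ⊆ H := fun i => by unfold T; split_ifs <;> exact filter_subset _ _
  have hT : ∀ i, 0 ≤ ∑ s ∈ T i, y s := fun i => sum_nonneg fun s hs => hy s (hTH i hs)
  calc _ ≤ ∑ g ∈ Fintype.piFinset T, ∏ i, y (g i) := by
        refine sum_le_sum_of_subset_of_nonneg (fun g hg => ?_) fun g hg _ =>
          prod_nonneg fun i _ => hy _ (hTH i (Fintype.mem_piFinset.1 hg i))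
        obtain ⟨hgH, hgQ⟩ := hG g hg
        refine Fintype.mem_piFinset.2 fun i => ?_
        by_cases hi : i = j
        · subst hi; simpa [T] using ⟨(hgH i).1, hgQ⟩
        · simpa [T, hi] using hgH i
    _ = ∏ i, ∑ s ∈ T i, y s := (prod_univ_sum T fun _ s => y s).symm
    _ = (∑ s ∈ T j, y s) * ∏ i ∈ univ.erase j, ∑ s ∈ T i, y s :=
        (mul_prod_erase _ _ (mem_univ j)).symm
    _ ≤ ∑ s ∈ H with Q s, y s := by
        refine (mul_le_of_le_one_right (hT j) <|
          prod_le_one (fun i _ => hT i) fun i hi => ?_).trans_eq ?_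
        · simpa [T, (mem_erase.1 hi).1] using hx
        · simp [T]

theorem pow_sum_le_mul_sum_of_witnesses {α : Type*} {p d : ℕ} (H : Finset (Set α))
    (L : Set α → Finset α) (hL : ∀ s ∈ H, #(L s) ≤ d)
    (hwit : ∀ g ∈ Fintype.piFinset fun _ : Fin p => H, ∃ j, ∃ x ∈ L (g j), ∀ i, x ∈ g i)
    {y : Set α → ℝ} (hy : ∀ s ∈ H, 0 ≤ y s)
    (hdeg : ∀ x ∈ H.biUnion L, ∑ s ∈ H with x ∈ s, y s ≤ 1) :
    (∑ s ∈ H, y s) ^ p ≤ p * d * ∑ s ∈ H, y s := by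
  set X := H.biUnion L
  set G := Fintype.piFinset fun _ : Fin p => H
  calc (∑ s ∈ H, y s) ^ p = ∑ g ∈ G, ∏ i, y (g i) := by rw [← Fin.prod_const, prod_univ_sum]
    _ ≤ ∑ jx ∈ (univ : Finset (Fin p)) ×ˢ X,
          ∑ g ∈ G with jx.2 ∈ L (g jx.1) ∧ ∀ i, jx.2 ∈ g i, ∏ i, y (g i) := by
        refine sum_le_sum_sum_filter_of_forall_exists
          (fun g hg => prod_nonneg fun i _ => hy _ (Fintype.mem_piFinset.1 hg i)) fun g hg => ?_
        obtain ⟨j, x, hx, hall⟩ := hwit g hg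
        refine ⟨(j, x), mem_product.2 ⟨mem_univ j, ?_⟩, hx, hall⟩
        exact mem_biUnion.2 ⟨g j, Fintype.mem_piFinset.1 hg j, hx⟩
    _ ≤ ∑ jx ∈ (univ : Finset (Fin p)) ×ˢ X, ∑ s ∈ H with jx.2 ∈ L s, y s := by
        gcongr with jx hjx
        exact sum_prod_le_sum_filter hy (hdeg _ (mem_product.1 hjx).2) fun g hg =>
          have hg := mem_filter.1 hg
          ⟨fun i => ⟨Fintype.mem_piFinset.1 hg.1 i, hg.2.2 i⟩, hg.2.1⟩
    _ = p * ∑ s ∈ H, #{x ∈ X | x ∈ L s} * y s := by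
        simp only [sum_product, sum_const, card_univ, Fintype.card_fin, nsmul_eq_mul]
        rw [sum_comm' (t' := H) (s' := fun s => {x ∈ X | x ∈ L s}) (by simp; tauto)]
        simp only [sum_const, nsmul_eq_mul]
    _ ≤ p * ∑ s ∈ H, d * y s := by
        gcongr with s hs
        · exact hy s hs
        · exact_mod_cast (card_le_card fun x hx => (mem_filter.1 hx).2).trans (hL s hs)
    _ = p * d * ∑ s ∈ H, y s := by rw [← mul_sum, mul_assoc]

theorem le_rpow_one_div_sub_one {t K : ℝ} {p : ℕ} (ht : 0 ≤ t) (hK : 0 ≤ K) (hp : 1 < p)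
    (h : t ^ p ≤ K * t) : t ≤ K ^ (1 / ((p : ℝ) - 1)) := by
  rcases ht.eq_or_lt with rfl | ht
  · exact Real.rpow_nonneg hK _
  have hpow : t ^ (p - 1) ≤ K :=
    le_of_mul_le_mul_right (by rwa [← pow_succ, Nat.sub_add_cancel hp.le]) ht
  rw [one_div, ← Nat.cast_one, ← Nat.cast_sub hp.le]
  calc t = (t ^ (p - 1)) ^ ((p - 1 : ℕ) : ℝ)⁻¹ :=
        (Real.pow_rpow_inv_natCast ht.le (by omega)).symm
    _ ≤ K ^ ((p - 1 : ℕ) : ℝ)⁻¹ := Real.rpow_le_rpow (by positivity) hpow (by positivity)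

theorem HasPQProperty.exists_mem_of_card_le {H : Finset (Set ℝ)} {p : ℕ}
    (hprop : HasPQProperty H p p) (hcard : p ≤ #H) {T : Finset (Set ℝ)} (hTH : T ⊆ H)
    (hT : #T ≤ p) : ∃ z, ∀ s ∈ T, z ∈ s := by
  obtain ⟨S, hTS, hSH, hS⟩ := exists_subsuperset_card_eq hTH hT hcard
  obtain ⟨S', hS'S, hS', z, hz⟩ := hprop S hSH hS
  obtain rfl := eq_of_subset_of_card_le hS'S (hS.trans hS'.symm).le
  exact ⟨z, fun s hs => Set.mem_iInter₂.1 hz s (hTS hs)⟩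

theorem exists_fst_mem_forall_of_mem_forall {ι : Type*} [Finite ι] [Nonempty ι]
    {g : ι → Set ℝ} {P : ι → Finset (ℝ × ℝ)} (hP : ∀ i, g i = ⋃ I ∈ P i, Set.Icc I.1 I.2)
    {z : ℝ} (hz : ∀ i, z ∈ g i) : ∃ j, ∃ I ∈ P j, ∀ i, I.1 ∈ g i := by
  have hpiece : ∀ i, ∃ I ∈ P i, z ∈ Set.Icc I.1 I.2 := fun i => by
    obtain ⟨I, hI, hzI⟩ := Set.mem_iUnion₂.1 (hP i ▸ hz i)
    exact ⟨I, hI, hzI⟩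
  choose I hIP hzI using hpiece
  obtain ⟨j, hj⟩ := Finite.exists_max fun i => (I i).1
  refine ⟨j, I j, hIP j, fun i => ?_⟩
  rw [hP i]
  exact Set.mem_biUnion (hIP i) ⟨hj i, (hzI j).1.trans (hzI i).2⟩

theorem HasPQProperty.exists_fst_mem_forall {H : Finset (Set ℝ)} {p : ℕ}
    (hprop : HasPQProperty H p p) (hcard : p ≤ #H) (hp : 0 < p) {P : Set ℝ → Finset (ℝ × ℝ)}
    (hP : ∀ s ∈ H, s = ⋃ I ∈ P s, Set.Icc I.1 I.2) :
    ∀ g ∈ Fintype.piFinset fun _ : Fin p => H, ∃ j, ∃ x ∈ (P (g j)).image Prod.fst,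
      ∀ i, x ∈ g i := by
  intro g hg
  have hgH := Fintype.mem_piFinset.1 hg
  obtain ⟨z, hz⟩ := hprop.exists_mem_of_card_le hcard (T := univ.image g)
    (fun s hs => by obtain ⟨i, -, rfl⟩ := mem_image.1 hs; exact hgH i)
    (card_image_le.trans (by simp))
  have : Nonempty (Fin p) := ⟨⟨0, hp⟩⟩
  obtain ⟨j, I, hI, hIg⟩ := exists_fst_mem_forall_of_mem_forall (fun i => hP _ (hgH i))
    fun i => hz _ (mem_image_of_mem g (mem_univ i))
  exact ⟨j, I.1, mem_image_of_mem _ hI, hIg⟩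

theorem exists_one_div_le_sum_filter {α β : Type*} {X : Finset α} {w : α → ℝ}
    (hw : ∀ x ∈ X, 0 ≤ w x) {P : Finset β} {f : β → Set α} [∀ i, DecidablePred (· ∈ f i)]
    {d : ℕ} (hP : #P ≤ d) (h : 1 ≤ ∑ x ∈ X with x ∈ ⋃ i ∈ P, f i, w x) :
    ∃ i ∈ P, 1 / d ≤ ∑ x ∈ X with x ∈ f i, w x := by
  rcases P.eq_empty_or_nonempty with rfl | hne
  · simp at h; linarith
  have hd : (0 : ℝ) < d := by exact_mod_cast hne.card_pos.trans_le hP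
  refine exists_le_of_sum_le hne (h.trans' ?_ |>.trans ?_)
  · rw [sum_const, nsmul_eq_mul, mul_one_div, div_le_one hd]
    exact_mod_cast hP
  · refine (sum_le_sum_sum_filter_of_forall_exists (fun x hx => hw x (mem_filter.1 hx).1)
      fun x hx => by simpa using (mem_filter.1 hx).2).trans (sum_le_sum fun i _ => ?_)
    exact sum_le_sum_of_subset_of_nonneg (filter_subset_filter _ (filter_subset _ _))
      fun x hx _ => hw x (mem_filter.1 hx).1

theorem exists_finset_mem_Icc_card_le {ι : Type*} (F : Finset ι) (a b : ι → ℝ) (X : Finset ℝ)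
    {w : ℝ → ℝ} (hw : ∀ x ∈ X, 0 ≤ w x) {ε : ℝ} (hε : 0 < ε)
    (hF : ∀ i ∈ F, ε ≤ ∑ x ∈ X with x ∈ Set.Icc (a i) (b i), w x) :
    ∃ C : Finset ℝ, (∀ i ∈ F, ∃ x ∈ C, x ∈ Set.Icc (a i) (b i)) ∧ ε * #C ≤ ∑ x ∈ X, w x := by
  induction F using strongInduction generalizing X with
  | H F ih =>
  rcases F.eq_empty_or_nonempty with rfl | hne
  · exact ⟨∅, by simp, by simpa using sum_nonneg hw⟩
  obtain ⟨i₀, hi₀, hmin⟩ := F.exists_min_image b hne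
  have hab : a i₀ ≤ b i₀ := by
    by_contra hlt
    have := hF i₀ hi₀
    simp [Set.Icc_eq_empty hlt] at this
    linarith
  -- `b i₀` pierces every interval starting at or before it; the rest lie right of `b i₀`.
  obtain ⟨C, hC, hCw⟩ := ih {i ∈ F | b i₀ < a i} (filter_ssubset.2 ⟨i₀, hi₀, hab.not_gt⟩)
    {x ∈ X | b i₀ < x} (fun x hx => hw x (mem_filter.1 hx).1) fun i hi => by
      rw [filter_filter, filter_congr fun x _ => and_iff_right_of_imp
        fun hx : x ∈ Set.Icc (a i) (b i) => (mem_filter.1 hi).2.trans_le hx.1]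
      exact hF i (mem_filter.1 hi).1
  refine ⟨insert (b i₀) C, fun i hi => ?_, ?_⟩
  · by_cases hai : a i ≤ b i₀
    · exact ⟨b i₀, mem_insert_self _ _, hai, hmin i hi⟩
    · obtain ⟨x, hxC, hx⟩ := hC i (mem_filter.2 ⟨hi, not_le.1 hai⟩)
      exact ⟨x, mem_insert_of_mem hxC, hx⟩
  · have hleft : ε ≤ ∑ x ∈ X with ¬ b i₀ < x, w x :=
      (hF i₀ hi₀).trans <| sum_le_sum_of_subset_of_nonneg
        (monotone_filter_right X fun x _ hx => not_lt.2 hx.2) fun x hx _ => hw x (mem_filter.1 hx).1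
    have hcard : (#(insert (b i₀) C) : ℝ) ≤ #C + 1 := by exact_mod_cast card_insert_le _ _
    calc ε * #(insert (b i₀) C) ≤ ε * #C + ε := by nlinarith
      _ ≤ ∑ x ∈ X with b i₀ < x, w x + ∑ x ∈ X with ¬ b i₀ < x, w x := add_le_add hCw hleft
      _ = ∑ x ∈ X, w x := sum_filter_add_sum_filter_not _ _ _

theorem mul_mul_rpow_one_div_sub_one {p d : ℝ} (hp : 1 < p) (hd : 0 < d) :
    d * (p * d) ^ (1 / (p - 1)) = p ^ (1 / (p - 1)) * d ^ (p / (p - 1)) := by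
  have : p / (p - 1) = 1 + 1 / (p - 1) := by
    field_simp [(sub_pos.2 hp).ne']
    ring
  rw [Real.mul_rpow (by linarith) hd.le, this, Real.rpow_add hd, Real.rpow_one]
  ring

theorem cover_of_pp_property (p d : ℕ) (hp : 2 ≤ p) (hd : 1 ≤ d)
    (H : Finset (Set ℝ)) (hH : ∀ s ∈ H, IsDInterval d s) (hcard : p ≤ H.card)
    (hprop : HasPQProperty H p p) :
    (coverNum H : ℝ) <
      (p : ℝ) ^ (1 / ((p : ℝ) - 1)) * (d : ℝ) ^ ((p : ℝ) / ((p : ℝ) - 1)) + d := by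
  choose! P hPcard hPeq using fun s hs => (hH s hs).2
  let L : Set ℝ → Finset ℝ := fun s => (P s).image Prod.fst
  have hd0 : (0 : ℝ) < d := by exact_mod_cast hd
  have hpd : (0 : ℝ) < p * d := mul_pos (by exact_mod_cast (by omega : 0 < p)) hd0
  obtain ⟨w, hw0, hwcov, hwB⟩ := exists_fractional_cover_of_packing_le (H.biUnion L) H
    (Real.rpow_pos_of_pos hpd (1 / ((p : ℝ) - 1))) fun y hy hdeg =>
      le_rpow_one_div_sub_one (sum_nonneg hy) hpd.le (by omega) <|
        pow_sum_le_mul_sum_of_witnesses H L (fun s hs => card_image_le.trans (hPcard s hs))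
          (hprop.exists_fst_mem_forall hcard (by omega) hPeq) hy hdeg
  choose! I hIP hIw using fun s hs =>
    exists_one_div_le_sum_filter (f := fun I : ℝ × ℝ => Set.Icc I.1 I.2) hw0 (hPcard s hs)
      (hPeq s hs ▸ hwcov s hs)
  obtain ⟨C, hC, hCw⟩ := exists_finset_mem_Icc_card_le H (fun s => (I s).1) (fun s => (I s).2)
    _ hw0 (one_div_pos.2 hd0) hIw
  have hτ : coverNum H ≤ #C := Nat.sInf_le ⟨C, rfl, fun s hs => by
    obtain ⟨x, hxC, hx⟩ := hC s hs
    exact ⟨x, hxC, hPeq s hs ▸ Set.mem_biUnion (hIP s hs) hx⟩⟩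
  calc (coverNum H : ℝ) ≤ #C := by exact_mod_cast hτ
    _ ≤ d * ((p : ℝ) * d) ^ (1 / ((p : ℝ) - 1)) := by
        rw [← div_le_iff₀' hd0, ← one_div_mul_eq_div]
        exact hCw.trans hwB
    _ = _ := mul_mul_rpow_one_div_sub_one (by exact_mod_cast hp) hd0
    _ < _ := lt_add_of_pos_right _ hd0
end

section
/- Let p ≥ q ≥ 2 and d ≥ 1 be integers and let H be a finite family of d-intervals with |H| ≥ p. If H satisfies the (p,q) property, then the covering number satisfies τ(H) ≤ max{ (2^{1/(q-1)} · (e·p)^{q/(q-1)} / q) · d^{q/(q-1)} + d , 2·p²·d }. -/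
open Finset
open scoped Nat Matrix

theorem Finset.sum_le_sum_sum_filter_of_forall_exists_s3 {ι κ M : Type*} [AddCommMonoid M]
    [PartialOrder M] [IsOrderedAddMonoid M] {s : Finset ι} {t : Finset κ} {P : ι → κ → Prop}
    [∀ i j, Decidable (P i j)] {g : ι → M} (hg : ∀ i ∈ s, 0 ≤ g i)
    (hP : ∀ i ∈ s, ∃ j ∈ t, P i j) :
    ∑ i ∈ s, g i ≤ ∑ j ∈ t, ∑ i ∈ s with P i j, g i :=
  calc ∑ i ∈ s, g i ≤ ∑ i ∈ s, ∑ j ∈ t with P i j, g i := sum_le_sum fun i hi => by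
        obtain ⟨j, hj, hPj⟩ := hP i hi
        exact single_le_sum (fun _ _ => hg i hi) (mem_filter.2 ⟨hj, hPj⟩)
    _ = ∑ j ∈ t, ∑ i ∈ s with P i j, g i := sum_comm' fun _ _ => by simp only [mem_filter]; tauto

section ElementarySymmetric

variable {α : Type*} {f : α → ℝ}

theorem esymm_map_val_nonneg (hf : 0 ≤ f) (s : Finset α) (k : ℕ) :
    0 ≤ (s.val.map f).esymm k := by
  rw [esymm_map_val]
  exact sum_nonneg fun T _ => prod_nonneg fun x _ => hf x

theorem esymm_map_val_mono (hf : 0 ≤ f) {s t : Finset α} (hst : s ⊆ t) (k : ℕ) :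
    (s.val.map f).esymm k ≤ (t.val.map f).esymm k := by
  simp only [esymm_map_val]
  exact sum_le_sum_of_subset_of_nonneg (powersetCard_mono hst) fun T _ _ =>
    prod_nonneg fun x _ => hf x

variable [DecidableEq α]

theorem succ_mul_esymm_map_val (s : Finset α) (k : ℕ) :
    (k + 1 : ℝ) * (s.val.map f).esymm (k + 1) =
      ∑ i ∈ s, f i * ((s.erase i).val.map f).esymm k := by
  simp only [esymm_map_val, mul_sum]
  calc ∑ T ∈ powersetCard (k + 1) s, (k + 1 : ℝ) * ∏ x ∈ T, f x
      = ∑ T ∈ powersetCard (k + 1) s, ∑ i ∈ T, f i * ∏ x ∈ T.erase i, f x :=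
        sum_congr rfl fun T hT => by
          rw [sum_congr rfl fun i hi => mul_prod_erase T f hi, sum_const,
            (mem_powersetCard.1 hT).2, nsmul_eq_mul]
          push_cast; ring
    _ = ∑ i ∈ s, ∑ T ∈ powersetCard (k + 1) s with i ∈ T, f i * ∏ x ∈ T.erase i, f x :=
        sum_comm' fun T i => by
          simp only [mem_filter, mem_powersetCard]
          constructor
          · rintro ⟨⟨hTs, hT⟩, hi⟩; exact ⟨⟨⟨hTs, hT⟩, hi⟩, hTs hi⟩
          · rintro ⟨⟨⟨hTs, hT⟩, hi⟩, -⟩; exact ⟨⟨hTs, hT⟩, hi⟩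
    _ = ∑ i ∈ s, ∑ U ∈ powersetCard k (s.erase i), f i * ∏ x ∈ U, f x :=
        sum_congr rfl fun i hi => sum_nbij' (fun T => T.erase i) (insert i)
          (fun T hT => by
            simp only [mem_filter, mem_powersetCard] at hT ⊢
            exact ⟨erase_subset_erase i hT.1.1, by rw [card_erase_of_mem hT.2, hT.1.2]; rfl⟩)
          (fun U hU => by
            simp only [mem_filter, mem_powersetCard] at hU ⊢
            have hiU : i ∉ U := fun h => (mem_erase.1 (hU.1 h)).1 rfl
            refine ⟨⟨insert_subset hi (hU.1.trans (erase_subset i s)), ?_⟩, mem_insert_self i U⟩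
            rw [card_insert_of_notMem hiU, hU.2])
          (fun T hT => insert_erase (mem_filter.1 hT).2)
          (fun U hU => erase_insert fun h => (mem_erase.1 ((mem_powersetCard.1 hU).1 h)).1 rfl)
          (fun _ _ => rfl)

theorem factorial_mul_esymm_map_val_le (hf : 0 ≤ f) (s : Finset α) (k : ℕ) :
    (k ! : ℝ) * (s.val.map f).esymm k ≤ (∑ x ∈ s, f x) ^ k := by
  induction k with
  | zero => simp [esymm_map_val]
  | succ k ih =>
    have hstep : (k + 1 : ℝ) * (s.val.map f).esymm (k + 1) ≤
        (∑ x ∈ s, f x) * (s.val.map f).esymm k := by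
      rw [succ_mul_esymm_map_val, sum_mul]
      exact sum_le_sum fun i _ =>
        mul_le_mul_of_nonneg_left (esymm_map_val_mono hf (erase_subset i s) k) (hf i)
    calc ((k + 1) ! : ℝ) * (s.val.map f).esymm (k + 1)
        = k ! * ((k + 1 : ℝ) * (s.val.map f).esymm (k + 1)) := by
          rw [Nat.factorial_succ]; push_cast; ring
      _ ≤ k ! * ((∑ x ∈ s, f x) * (s.val.map f).esymm k) := by gcongr
      _ = (∑ x ∈ s, f x) * (k ! * (s.val.map f).esymm k) := by ring
      _ ≤ (∑ x ∈ s, f x) ^ (k + 1) := by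
          rw [_root_.pow_succ']
          exact mul_le_mul_of_nonneg_left ih (sum_nonneg fun x _ => hf x)

theorem esymm_map_val_le_inv_factorial (hf : 0 ≤ f) {s : Finset α} (hs : ∑ x ∈ s, f x ≤ 1)
    (k : ℕ) : (s.val.map f).esymm k ≤ (k ! : ℝ)⁻¹ := by
  rw [← one_div, le_div_iff₀ (by positivity), mul_comm]
  exact (factorial_mul_esymm_map_val_le hf s k).trans
    (pow_le_one₀ (sum_nonneg fun x _ => hf x) hs)

theorem sub_pow_le_factorial_mul_esymm_map_val (hf : 0 ≤ f) (k : ℕ) {s : Finset α}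
    (hf₁ : ∀ x ∈ s, f x ≤ 1) (hk : (k : ℝ) ≤ ∑ x ∈ s, f x) :
    (∑ x ∈ s, f x - k) ^ k ≤ k ! * (s.val.map f).esymm k := by
  induction k generalizing s with
  | zero => simp [esymm_map_val]
  | succ k ih =>
    set S := ∑ x ∈ s, f x
    push_cast at hk ⊢
    have hstep : ∀ i ∈ s, (S - (k + 1)) ^ k ≤ k ! * ((s.erase i).val.map f).esymm k := by
      intro i hi
      have hsum : ∑ x ∈ s.erase i, f x = S - f i := sum_erase_eq_sub hi
      calc (S - (k + 1)) ^ k ≤ (∑ x ∈ s.erase i, f x - k) ^ k := by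
            rw [hsum]
            exact pow_le_pow_left₀ (by linarith) (by linarith [hf₁ i hi]) k
        _ ≤ _ := ih (fun x hx => hf₁ x (mem_of_mem_erase hx)) (by linarith [hf₁ i hi])
    calc (S - (k + 1)) ^ (k + 1) ≤ S * (S - (k + 1)) ^ k := by
          rw [_root_.pow_succ']
          exact mul_le_mul_of_nonneg_right (by linarith) (pow_nonneg (by linarith) k)
      _ = ∑ i ∈ s, f i * (S - (k + 1)) ^ k := by rw [sum_mul]
      _ ≤ ∑ i ∈ s, f i * (k ! * ((s.erase i).val.map f).esymm k) :=
          sum_le_sum fun i hi => mul_le_mul_of_nonneg_left (hstep i hi) (hf i)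
      _ = (k + 1) ! * (s.val.map f).esymm (k + 1) := by
          rw [Nat.factorial_succ, Nat.cast_mul, mul_comm ((k + 1 : ℕ) : ℝ), mul_assoc,
            Nat.cast_succ, succ_mul_esymm_map_val, mul_sum]
          exact sum_congr rfl fun i _ => by ring

theorem sum_prod_le_prod_mul_esymm_map_val (hf : 0 ≤ f) {s t : Finset α}
    {𝒮 : Finset (Finset α)} {k : ℕ} (h𝒮 : 𝒮 ⊆ s.powersetCard k) :
    ∑ S ∈ 𝒮 with t ⊆ S, ∏ x ∈ S, f x ≤ (∏ x ∈ t, f x) * (s.val.map f).esymm (k - #t) := by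
  have hinj : Set.InjOn (· \ t) (𝒮.filter (t ⊆ ·) : Set (Finset α)) := fun S₁ h₁ S₂ h₂ h => by
    rw [← sdiff_union_of_subset (mem_filter.1 h₁).2, ← sdiff_union_of_subset (mem_filter.1 h₂).2]
    exact congrArg (· ∪ t) h
  have himage : (𝒮.filter (t ⊆ ·)).image (· \ t) ⊆ s.powersetCard (k - #t) := by
    simp only [subset_iff, mem_image, mem_filter, mem_powersetCard]
    rintro _ ⟨S, ⟨hS, htS⟩, rfl⟩
    obtain ⟨hSs, hSk⟩ := mem_powersetCard.1 (h𝒮 hS)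
    exact ⟨sdiff_subset.trans hSs, by rw [card_sdiff_of_subset htS, hSk]⟩
  calc ∑ S ∈ 𝒮 with t ⊆ S, ∏ x ∈ S, f x
      = (∏ x ∈ t, f x) * ∑ U ∈ (𝒮.filter (t ⊆ ·)).image (· \ t), ∏ x ∈ U, f x := by
        rw [sum_image hinj, mul_sum]
        exact sum_congr rfl fun S hS => by rw [mul_comm, prod_sdiff (mem_filter.1 hS).2]
    _ ≤ (∏ x ∈ t, f x) * (s.val.map f).esymm (k - #t) := by
        rw [esymm_map_val]
        exact mul_le_mul_of_nonneg_left
          (sum_le_sum_of_subset_of_nonneg himage fun U _ _ => prod_nonneg fun x _ => hf x)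
          (prod_nonneg fun x _ => hf x)

theorem esymm_map_val_le_sum_prod_mul_esymm_map_val (hf : 0 ≤ f) {s : Finset α}
    {𝒯 : Finset (Finset α)} {p q : ℕ} (h𝒯 : 𝒯 ⊆ s.powersetCard q)
    (hcov : ∀ S ∈ s.powersetCard p, ∃ T ∈ 𝒯, T ⊆ S) :
    (s.val.map f).esymm p ≤ (∑ T ∈ 𝒯, ∏ x ∈ T, f x) * (s.val.map f).esymm (p - q) := by
  rw [esymm_map_val, sum_mul]
  calc ∑ S ∈ s.powersetCard p, ∏ x ∈ S, f x
      ≤ ∑ T ∈ 𝒯, ∑ S ∈ s.powersetCard p with T ⊆ S, ∏ x ∈ S, f x :=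
        sum_le_sum_sum_filter_of_forall_exists_s3 (fun S _ => prod_nonneg fun x _ => hf x) hcov
    _ ≤ ∑ T ∈ 𝒯, (∏ x ∈ T, f x) * (s.val.map f).esymm (p - q) := sum_le_sum fun T hT => by
        simpa only [(mem_powersetCard.1 (h𝒯 hT)).2] using
          sum_prod_le_prod_mul_esymm_map_val hf (t := T) subset_rfl

theorem sum_prod_le_sum_sum_mul_esymm_map_val {β : Type*} (hf : 0 ≤ f) {s : Finset α}
    {𝒯 : Finset (Finset α)} {q : ℕ} (h𝒯 : 𝒯 ⊆ s.powersetCard q) (star : β → Finset α)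
    (P : α → Finset β) (hwit : ∀ T ∈ 𝒯, ∃ x ∈ T, ∃ b ∈ P x, T ⊆ star b) :
    ∑ T ∈ 𝒯, ∏ x ∈ T, f x ≤ ∑ x ∈ s, ∑ b ∈ P x, f x * ((star b).val.map f).esymm (q - 1) := by
  calc ∑ T ∈ 𝒯, ∏ x ∈ T, f x
      ≤ ∑ xb ∈ s.sigma P, ∑ T ∈ 𝒯 with xb.1 ∈ T ∧ T ⊆ star xb.2, ∏ x ∈ T, f x :=
        sum_le_sum_sum_filter_of_forall_exists_s3 (fun T _ => prod_nonneg fun x _ => hf x)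
          fun T hT => by
            obtain ⟨x, hx, b, hb, hTb⟩ := hwit T hT
            exact ⟨⟨x, b⟩, mem_sigma.2 ⟨(mem_powersetCard.1 (h𝒯 hT)).1 hx, hb⟩, hx, hTb⟩
    _ ≤ ∑ xb ∈ s.sigma P, f xb.1 * ((star xb.2).val.map f).esymm (q - 1) :=
        sum_le_sum fun xb _ => by
          have h𝒮 : 𝒯.filter (· ⊆ star xb.2) ⊆ (star xb.2).powersetCard q := fun T hT => by
            obtain ⟨hT, hTb⟩ := mem_filter.1 hT
            exact mem_powersetCard.2 ⟨hTb, (mem_powersetCard.1 (h𝒯 hT)).2⟩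
          simpa [filter_filter, and_comm] using
            sum_prod_le_prod_mul_esymm_map_val hf (t := {xb.1}) h𝒮
    _ = _ := sum_sigma s P fun xb => f xb.1 * ((star xb.2).val.map f).esymm (q - 1)

end ElementarySymmetric

theorem pow_le_two_mul_sub_pow {x : ℝ} {n : ℕ} (hx : 2 * n ^ 2 ≤ x) : x ^ n ≤ 2 * (x - n) ^ n := by
  rcases n.eq_zero_or_pos with rfl | hn
  · norm_num
  have hn1 : (1 : ℝ) ≤ n := by exact_mod_cast hn
  have hx0 : 0 < x := by nlinarith
  have hnx : n * (n / x) ≤ 1 / 2 := by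
    rw [mul_div_assoc', div_le_iff₀ hx0]; nlinarith
  have hbern := one_add_mul_le_pow (a := -(n / x)) (by
    have : (n : ℝ) / x ≤ 1 := by rw [div_le_one hx0]; nlinarith
    linarith) n
  have hsub : (x - n) ^ n = x ^ n * (1 + -(n / x)) ^ n := by
    rw [← mul_pow]; congr 1; field_simp; ring
  rw [hsub]
  nlinarith [pow_pos hx0 n]

theorem apply_single_nonneg_of_forall_lt {κ : Type*} [DecidableEq κ] (f : (κ → ℝ) →L[ℝ] ℝ)
    {v : ℝ} (hf : ∀ y : κ → ℝ, (∀ k, 1 ≤ y k) → v < f y) (k : κ) : 0 ≤ f (Pi.single k 1) := by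
  by_contra! hk
  set t := (f 1 - v) / -f (Pi.single k 1)
  have ht : t * f (Pi.single k 1) = v - f 1 := by
    rw [div_mul_eq_mul_div, div_eq_iff (neg_ne_zero.2 hk.ne)]; ring
  have ht₀ : 0 ≤ t := div_nonneg (by linarith [hf 1 fun _ => le_rfl]) (by linarith)
  have := hf (1 + t • Pi.single k 1) fun j => by
    have : 0 ≤ (Pi.single k 1 : κ → ℝ) j := by
      rw [Pi.single_apply]; split <;> norm_num
    simpa using mul_nonneg ht₀ this
  rw [map_add, map_smul, smul_eq_mul, ht] at this
  linarith

theorem exists_nonneg_one_le_mulVec {ι κ : Type*} [Fintype ι] [Fintype κ] (M : Matrix κ ι ℝ)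
    {B : ℝ} (hB : 0 ≤ B) (h : ∀ w : κ → ℝ, 0 ≤ w → ∃ i, ∑ k, w k ≤ B * ∑ k, w k * M k i) :
    ∃ c : ι → ℝ, 0 ≤ c ∧ (∀ k, 1 ≤ (M *ᵥ c) k) ∧ ∑ i, c i = B := by
  classical
  set K := (B • M).mulVecLin '' stdSimplex ℝ ι
  set Q : Set (κ → ℝ) := Set.univ.pi fun _ => Set.Ici 1
  by_cases hKQ : Disjoint K Q
  · obtain ⟨f, u, v, hfu, huv, hvf⟩ := geometric_hahn_banach_compact_closed
      ((convex_stdSimplex ℝ ι).linear_image _)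
      ((isCompact_stdSimplex ℝ ι).image (LinearMap.continuous_of_finiteDimensional _))
      (convex_pi fun _ _ => convex_Ici 1) (isClosed_set_pi fun _ _ => isClosed_Ici) hKQ
    set w : κ → ℝ := fun k => f (Pi.single k 1)
    have hf : ∀ y, f y = ∑ k, y k * w k := fun y => by
      conv_lhs => rw [pi_eq_sum_univ' y]
      simp [w, smul_eq_mul]
    have hv : v < ∑ k, w k := by simpa [hf] using hvf 1 fun k _ => Set.mem_Ici.2 le_rfl
    obtain ⟨i, hi⟩ := h w fun k =>
      apply_single_nonneg_of_forall_lt f (fun y hy => hvf y fun k _ => hy k) k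
    have hu := hfu _ ⟨Pi.single i 1, single_mem_stdSimplex ℝ i, rfl⟩
    simp only [hf, Matrix.mulVecLin_apply, Matrix.mulVec_single_one, Matrix.col_apply,
      Matrix.smul_apply, smul_eq_mul] at hu
    have : ∑ k, B * M k i * w k = B * ∑ k, w k * M k i := by
      rw [mul_sum]; exact sum_congr rfl fun k _ => by ring
    linarith
  · obtain ⟨_, ⟨x, hx, rfl⟩, hQ⟩ := Set.not_disjoint_iff.1 hKQ
    refine ⟨B • x, smul_nonneg hB hx.1, fun k => ?_, by simp [← mul_sum, hx.2]⟩
    simpa [Matrix.mulVec_smul, Matrix.smul_mulVec] using hQ k (Set.mem_univ k)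

theorem exists_fractional_cover {β γ : Type*} (H : Finset β) (A : Finset γ) (M : β → γ → ℝ)
    {B : ℝ} (hB : 0 ≤ B)
    (h : ∀ w : β → ℝ, 0 ≤ w → ∃ a ∈ A, ∑ k ∈ H, w k ≤ B * ∑ k ∈ H, w k * M k a) :
    ∃ c : γ → ℝ, 0 ≤ c ∧ (∀ k ∈ H, 1 ≤ ∑ a ∈ A, M k a * c a) ∧ ∑ a ∈ A, c a = B := by
  classical
  obtain ⟨c, hc0, hc, hcB⟩ := exists_nonneg_one_le_mulVec (fun (k : H) (a : A) => M k a) hB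
    fun w hw => by
      obtain ⟨a, ha, hle⟩ := h (fun k => if hk : k ∈ H then w ⟨k, hk⟩ else 0) fun k => by
        dsimp only; split_ifs
        exacts [hw _, le_rfl]
      exact ⟨⟨a, ha⟩, by simpa [← sum_coe_sort H] using hle⟩
  refine ⟨fun a => if ha : a ∈ A then c ⟨a, ha⟩ else 0, fun a => ?_, fun k hk => ?_, ?_⟩
  · dsimp only; split_ifs
    exacts [hc0 _, le_rfl]
  · simpa [Matrix.mulVec, dotProduct, ← sum_coe_sort A] using hc ⟨k, hk⟩
  · simpa [← sum_coe_sort A] using hcB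

theorem exists_pairwiseDisjoint_subset_piercing (F : Finset (ℝ × ℝ)) (hF : ∀ I ∈ F, I.1 ≤ I.2) :
    ∃ D ⊆ F, (D : Set (ℝ × ℝ)).PairwiseDisjoint (fun I => Set.Icc I.1 I.2) ∧
      ∃ C : Finset ℝ, #C ≤ #D ∧ ∀ I ∈ F, ∃ x ∈ C, x ∈ Set.Icc I.1 I.2 := by
  induction F using Finset.strongInduction with | H F ih =>
  rcases F.eq_empty_or_nonempty with rfl | hF₀
  · exact ⟨∅, subset_rfl, by simp, ∅, le_rfl, by simp⟩
  obtain ⟨I₀, hI₀, hmin⟩ := F.exists_min_image (·.2) hF₀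
  set G := F.filter fun I => I₀.2 ∉ Set.Icc I.1 I.2
  have hGF : G ⊂ F := filter_ssubset.2 ⟨I₀, hI₀, by simp [hF I₀ hI₀]⟩
  obtain ⟨D, hDG, hD, C, hCD, hC⟩ := ih G hGF fun I hI => hF I (mem_filter.1 hI).1
  -- the smallest right endpoint pierces every interval that is not entirely to its right
  have hright : ∀ J ∈ G, I₀.2 < J.1 := fun J hJ => by
    obtain ⟨hJF, hJ⟩ := mem_filter.1 hJ
    by_contra! h
    exact hJ ⟨h, hmin J hJF⟩
  have hI₀D : I₀ ∉ D := fun h => lt_irrefl _ ((hright I₀ (hDG h)).trans_le (hF I₀ hI₀))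
  refine ⟨insert I₀ D, insert_subset hI₀ (hDG.trans (filter_subset _ _)), ?_,
    insert I₀.2 C, ?_, fun I hI => ?_⟩
  · rw [coe_insert]
    refine hD.insert fun J hJ _ => Set.disjoint_left.2 fun x hx hx' => ?_
    linarith [hx.2, hx'.1, hright J (hDG hJ)]
  · rw [card_insert_of_notMem hI₀D]
    exact (card_insert_le _ _).trans (by omega)
  · by_cases hI' : I₀.2 ∈ Set.Icc I.1 I.2
    · exact ⟨I₀.2, mem_insert_self _ _, hI'⟩
    · obtain ⟨x, hx, hxI⟩ := hC I (mem_filter.2 ⟨hI, hI'⟩)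
      exact ⟨x, mem_insert_of_mem hx, hxI⟩

section DInterval

open scoped Classical

variable {d : ℕ} {H : Finset (Set ℝ)} {rep : Set ℝ → Finset (ℝ × ℝ)} {A : Finset ℝ} {c : ℝ → ℝ}

theorem exists_left_endpoint_mem {h : Set ℝ} (hne : h.Nonempty) {P : Finset (ℝ × ℝ)}
    (hP : h = ⋃ I ∈ P, Set.Icc I.1 I.2) : ∃ I ∈ P, I.1 ∈ h := by
  obtain ⟨x, hx⟩ := hne
  rw [hP] at hx ⊢
  obtain ⟨I, hI, hxI⟩ := Set.mem_iUnion₂.1 hx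
  exact ⟨I, hI, Set.mem_biUnion hI ⟨le_rfl, hxI.1.trans hxI.2⟩⟩

theorem exists_left_endpoint_mem_biInter {T : Finset (Set ℝ)} (hT : T.Nonempty)
    (hrep : ∀ h ∈ T, h = ⋃ I ∈ rep h, Set.Icc I.1 I.2) (hX : (⋂ h ∈ T, h).Nonempty) :
    ∃ h ∈ T, ∃ I ∈ rep h, ∀ h' ∈ T, I.1 ∈ h' := by
  obtain ⟨y, hy⟩ := hX
  have hJ : ∀ h ∈ T, ∃ I ∈ rep h, y ∈ Set.Icc I.1 I.2 := fun h hh => by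
    have := Set.mem_iInter₂.1 hy h hh
    rw [hrep h hh] at this
    obtain ⟨I, hI, hyI⟩ := Set.mem_iUnion₂.1 this
    exact ⟨I, hI, hyI⟩
  choose! J hJ hyJ using hJ
  -- the largest left endpoint among intervals through `y` lies in all of them
  obtain ⟨h₀, hh₀, hmax⟩ := T.exists_max_image (fun h => (J h).1) hT
  refine ⟨h₀, hh₀, J h₀, hJ h₀ hh₀, fun h hh => ?_⟩
  rw [hrep h hh]
  exact Set.mem_biUnion (hJ h hh) ⟨hmax h hh, (hyJ h₀ hh₀).1.trans (hyJ h hh).2⟩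

theorem exists_one_le_mul_sum_Icc (hc : 0 ≤ c) {h : Set ℝ} {P : Finset (ℝ × ℝ)}
    (hP : h = ⋃ I ∈ P, Set.Icc I.1 I.2) (hPd : #P ≤ d) (hcov : 1 ≤ ∑ a ∈ A with a ∈ h, c a) :
    ∃ I ∈ P, 1 ≤ d * ∑ a ∈ A with a ∈ Set.Icc I.1 I.2, c a := by
  have hsplit : ∑ a ∈ A with a ∈ h, c a ≤ ∑ I ∈ P, ∑ a ∈ A with a ∈ Set.Icc I.1 I.2, c a := by
    refine (sum_le_sum_sum_filter_of_forall_exists_s3 (fun a _ => hc a) fun a ha => ?_).trans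
      (sum_le_sum fun I _ => sum_le_sum_of_subset_of_nonneg
        (filter_subset_filter _ (filter_subset _ _)) fun a _ _ => hc a)
    have := (mem_filter.1 ha).2
    rw [hP] at this
    obtain ⟨I, hI, haI⟩ := Set.mem_iUnion₂.1 this
    exact ⟨I, hI, haI⟩
  refine exists_le_of_sum_le (nonempty_of_sum_ne_zero (by linarith : _ ≠ (0 : ℝ))) ?_
  calc ∑ _I ∈ P, (1 : ℝ) = #P := by simp
    _ ≤ d * ∑ a ∈ A with a ∈ h, c a := by
        have : (#P : ℝ) ≤ d := by exact_mod_cast hPd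
        nlinarith
    _ ≤ d * ∑ I ∈ P, ∑ a ∈ A with a ∈ Set.Icc I.1 I.2, c a := by gcongr
    _ = ∑ I ∈ P, d * ∑ a ∈ A with a ∈ Set.Icc I.1 I.2, c a := mul_sum _ _ _

theorem exists_cover_card_le (hrepc : ∀ h ∈ H, #(rep h) ≤ d)
    (hrep : ∀ h ∈ H, h = ⋃ I ∈ rep h, Set.Icc I.1 I.2) (hc : 0 ≤ c)
    (hcov : ∀ h ∈ H, 1 ≤ ∑ a ∈ A with a ∈ h, c a) :
    ∃ C : Finset ℝ, (∀ h ∈ H, ∃ x ∈ C, x ∈ h) ∧ (#C : ℝ) ≤ d * ∑ a ∈ A, c a := by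
  choose! J hJ hJc using fun h hh =>
    exists_one_le_mul_sum_Icc hc (hrep h hh) (hrepc h hh) (hcov h hh)
  have hJne : ∀ I ∈ H.image J, I.1 ≤ I.2 := forall_mem_image.2 fun h hh => by
    by_contra! hlt
    have := hJc h hh
    norm_num [Set.Icc_eq_empty_of_lt hlt] at this
  obtain ⟨D, hDH, hD, C, hCD, hC⟩ := exists_pairwiseDisjoint_subset_piercing _ hJne
  refine ⟨C, fun h hh => ?_, ?_⟩
  · obtain ⟨x, hx, hxJ⟩ := hC (J h) (mem_image_of_mem J hh)
    exact ⟨x, hx, by rw [hrep h hh]; exact Set.mem_biUnion (hJ h hh) hxJ⟩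
  have hweight : ∀ I ∈ D, 1 ≤ d * ∑ a ∈ A with a ∈ Set.Icc I.1 I.2, c a := fun I hI => by
    obtain ⟨h, hh, rfl⟩ := mem_image.1 (hDH hI)
    exact hJc h hh
  have hdisj : ∑ I ∈ D, ∑ a ∈ A with a ∈ Set.Icc I.1 I.2, c a ≤ ∑ a ∈ A, c a := by
    have hD' : (D : Set (ℝ × ℝ)).PairwiseDisjoint fun I => A.filter (· ∈ Set.Icc I.1 I.2) :=
      fun I hI J hJ hIJ => disjoint_filter.2 fun a _ haI haJ =>
        Set.disjoint_left.1 (hD hI hJ hIJ) haI haJ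
    rw [← sum_biUnion hD']
    exact sum_le_sum_of_subset_of_nonneg (biUnion_subset.2 fun I _ => filter_subset _ _)
      fun a _ _ => hc a
  calc (#C : ℝ) ≤ #D := by exact_mod_cast hCD
    _ = ∑ _I ∈ D, (1 : ℝ) := by simp
    _ ≤ ∑ I ∈ D, d * ∑ a ∈ A with a ∈ Set.Icc I.1 I.2, c a := sum_le_sum hweight
    _ ≤ d * ∑ a ∈ A, c a := by rw [← mul_sum]; exact mul_le_mul_of_nonneg_left hdisj d.cast_nonneg

noncomputable def leftEndpoints (H : Finset (Set ℝ)) (rep : Set ℝ → Finset (ℝ × ℝ)) : Finset ℝ :=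
  H.biUnion fun h => (rep h).image Prod.fst

theorem mem_leftEndpoints {h : Set ℝ} (hh : h ∈ H) {I : ℝ × ℝ} (hI : I ∈ rep h) :
    I.1 ∈ leftEndpoints H rep :=
  mem_biUnion.2 ⟨h, hh, mem_image_of_mem _ hI⟩

noncomputable def intersectingSubsets (H : Finset (Set ℝ)) (q : ℕ) : Finset (Finset (Set ℝ)) :=
  (H.powersetCard q).filter fun T => (⋂ h ∈ T, h).Nonempty

noncomputable def pqMatchingBound (p q d : ℕ) : ℝ :=
  max (2 * p ^ 2) ((2 * d * p ^ q / (q - 1)! : ℝ) ^ ((q - 1 : ℕ) : ℝ)⁻¹)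

theorem pqMatchingBound_nonneg (p q d : ℕ) : 0 ≤ pqMatchingBound p q d :=
  le_max_of_le_left (by positivity)

variable {m : Set ℝ → ℝ}

theorem sum_prod_intersectingSubsets_le (hrepc : ∀ h ∈ H, #(rep h) ≤ d)
    (hrep : ∀ h ∈ H, h = ⋃ I ∈ rep h, Set.Icc I.1 I.2) (hm : 0 ≤ m)
    (hload : ∀ a ∈ leftEndpoints H rep, ∑ h ∈ H with a ∈ h, m h ≤ 1) {q : ℕ} (hq : 1 ≤ q) :
    ∑ T ∈ intersectingSubsets H q, ∏ h ∈ T, m h ≤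
      d * (∑ h ∈ H, m h) / (q - 1)! := by
  have hwit : ∀ T ∈ intersectingSubsets H q, ∃ h ∈ T,
      ∃ a ∈ (rep h).image Prod.fst, T ⊆ H.filter (a ∈ ·) := fun T hT => by
    obtain ⟨hT, hX⟩ := mem_filter.1 hT
    obtain ⟨hTH, hTq⟩ := mem_powersetCard.1 hT
    obtain ⟨h, hh, I, hI, hIT⟩ := exists_left_endpoint_mem_biInter
      (card_pos.1 (by omega)) (fun h hh => hrep h (hTH hh)) hX
    exact ⟨h, hh, I.1, mem_image_of_mem _ hI, fun h' hh' => mem_filter.2 ⟨hTH hh', hIT h' hh'⟩⟩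
  calc _ ≤ ∑ h ∈ H, ∑ a ∈ (rep h).image Prod.fst,
        m h * ((H.filter (a ∈ ·)).val.map m).esymm (q - 1) :=
        sum_prod_le_sum_sum_mul_esymm_map_val hm (filter_subset _ _) _ _ hwit
    _ ≤ ∑ h ∈ H, ∑ _a ∈ (rep h).image Prod.fst, m h * ((q - 1)! : ℝ)⁻¹ := by
        refine sum_le_sum fun h hh => sum_le_sum fun a ha => mul_le_mul_of_nonneg_left ?_ (hm h)
        exact esymm_map_val_le_inv_factorial hm
          (hload a (mem_biUnion.2 ⟨h, hh, ha⟩)) _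
    _ ≤ ∑ h ∈ H, d * (m h * ((q - 1)! : ℝ)⁻¹) := sum_le_sum fun h hh => by
        rw [sum_const, nsmul_eq_mul]
        exact mul_le_mul_of_nonneg_right (by exact_mod_cast card_image_le.trans (hrepc h hh))
          (mul_nonneg (hm h) (by positivity))
    _ = d * (∑ h ∈ H, m h) / (q - 1)! := by rw [← mul_sum, ← sum_mul]; ring

theorem factorial_mul_esymm_le_of_hasPQProperty {p q : ℕ} (hprop : HasPQProperty H p q)
    (hqp : q ≤ p) (hm : 0 ≤ m) :
    (p ! : ℝ) * (H.val.map m).esymm p ≤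
      p ^ q * (∑ T ∈ intersectingSubsets H q, ∏ h ∈ T, m h) *
        (∑ h ∈ H, m h) ^ (p - q) := by
  have hcov : ∀ S ∈ H.powersetCard p,
      ∃ T ∈ intersectingSubsets H q, T ⊆ S := fun S hS => by
    obtain ⟨hSH, hSp⟩ := mem_powersetCard.1 hS
    obtain ⟨T, hTS, hTq, hT⟩ := hprop S hSH hSp
    exact ⟨T, mem_filter.2 ⟨mem_powersetCard.2 ⟨hTS.trans hSH, hTq⟩, hT⟩, hTS⟩
  have hfac : (p ! : ℝ) = p.descFactorial q * (p - q)! := by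
    rw [← Nat.factorial_mul_descFactorial hqp]; push_cast; ring
  calc (p ! : ℝ) * (H.val.map m).esymm p
      ≤ p ! * ((∑ T ∈ intersectingSubsets H q, ∏ h ∈ T, m h) *
          (H.val.map m).esymm (p - q)) :=
        mul_le_mul_of_nonneg_left
          (esymm_map_val_le_sum_prod_mul_esymm_map_val hm (filter_subset _ _) hcov) (by positivity)
    _ = p.descFactorial q * (∑ T ∈ intersectingSubsets H q, ∏ h ∈ T, m h) *
          ((p - q)! * (H.val.map m).esymm (p - q)) := by rw [hfac]; ring
    _ ≤ _ := by
        have hsum : 0 ≤ ∑ T ∈ intersectingSubsets H q, ∏ h ∈ T, m h :=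
          sum_nonneg fun T _ => prod_nonneg fun h _ => hm h
        exact mul_le_mul (mul_le_mul_of_nonneg_right
            (by exact_mod_cast Nat.descFactorial_le_pow p q) hsum)
          (factorial_mul_esymm_map_val_le hm H (p - q))
          (mul_nonneg (by positivity) (esymm_map_val_nonneg hm H _)) (by positivity)

theorem sum_le_pqMatchingBound {p q : ℕ} (hq : 2 ≤ q) (hqp : q ≤ p) (hprop : HasPQProperty H p q)
    (hne : ∀ h ∈ H, h.Nonempty) (hrepc : ∀ h ∈ H, #(rep h) ≤ d)
    (hrep : ∀ h ∈ H, h = ⋃ I ∈ rep h, Set.Icc I.1 I.2) (hm : 0 ≤ m)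
    (hload : ∀ a ∈ leftEndpoints H rep, ∑ h ∈ H with a ∈ h, m h ≤ 1) :
    ∑ h ∈ H, m h ≤ pqMatchingBound p q d := by
  set M := ∑ h ∈ H, m h
  rcases le_or_gt M (2 * p ^ 2) with hM | hM
  · exact le_max_of_le_left hM
  refine le_max_of_le_right ?_
  have hm₁ : ∀ h ∈ H, m h ≤ 1 := fun h hh => by
    obtain ⟨I, hI, hIh⟩ := exists_left_endpoint_mem (hne h hh) (hrep h hh)
    exact (single_le_sum (fun h' _ => hm h') (mem_filter.2 ⟨hh, hIh⟩)).trans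
      (hload I.1 (mem_leftEndpoints hh hI))
  have hp1 : (1 : ℝ) ≤ p := by exact_mod_cast (show 1 ≤ p by omega)
  have hp : (p : ℝ) ≤ M := by nlinarith
  have hM0 : 0 < M := by nlinarith
  have key : M ^ (q - 1) * M ^ (p - q + 1) ≤ 2 * d * p ^ q / (q - 1)! * M ^ (p - q + 1) :=
    calc M ^ (q - 1) * M ^ (p - q + 1) = M ^ p := by rw [← pow_add]; congr 1; omega
      _ ≤ 2 * (M - p) ^ p := pow_le_two_mul_sub_pow hM.le
      _ ≤ 2 * (p ! * (H.val.map m).esymm p) := by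
          gcongr; exact sub_pow_le_factorial_mul_esymm_map_val hm p hm₁ hp
      _ ≤ 2 * (p ^ q * (∑ T ∈ intersectingSubsets H q, ∏ h ∈ T, m h) *
            M ^ (p - q)) := by
          exact mul_le_mul_of_nonneg_left
            (factorial_mul_esymm_le_of_hasPQProperty hprop hqp hm) zero_le_two
      _ ≤ 2 * (p ^ q * (d * M / (q - 1)!) * M ^ (p - q)) := by
          have := sum_prod_intersectingSubsets_le hrepc hrep hm hload (by omega : 1 ≤ q)
          gcongr
      _ = 2 * d * p ^ q / (q - 1)! * M ^ (p - q + 1) := by ring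
  calc M = (M ^ (q - 1)) ^ ((q - 1 : ℕ) : ℝ)⁻¹ := (Real.pow_rpow_inv_natCast hM0.le (by omega)).symm
    _ ≤ _ := Real.rpow_le_rpow (by positivity) (le_of_mul_le_mul_right key (by positivity))
        (by positivity)

theorem exists_mem_leftEndpoints_sum_le_mul {p q : ℕ} (hq : 2 ≤ q) (hqp : q ≤ p)
    (hprop : HasPQProperty H p q) (hne : ∀ h ∈ H, h.Nonempty) (hrepc : ∀ h ∈ H, #(rep h) ≤ d)
    (hrep : ∀ h ∈ H, h = ⋃ I ∈ rep h, Set.Icc I.1 I.2) (hH : H.Nonempty) {w : Set ℝ → ℝ}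
    (hw : 0 ≤ w) : ∃ a ∈ leftEndpoints H rep,
      ∑ h ∈ H, w h ≤ pqMatchingBound p q d * ∑ h ∈ H with a ∈ h, w h := by
  set load : ℝ → ℝ := fun a => ∑ h ∈ H with a ∈ h, w h
  have hpt : ∀ h ∈ H, ∃ a ∈ leftEndpoints H rep, a ∈ h := fun h hh => by
    obtain ⟨I, hI, hIh⟩ := exists_left_endpoint_mem (hne h hh) (hrep h hh)
    exact ⟨I.1, mem_leftEndpoints hh hI, hIh⟩
  obtain ⟨h₀, hh₀⟩ := hH
  obtain ⟨a, ha, hmax⟩ := (leftEndpoints H rep).exists_max_image load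
    (let ⟨a, ha, _⟩ := hpt h₀ hh₀; ⟨a, ha⟩)
  refine ⟨a, ha, ?_⟩
  have hle : ∀ h ∈ H, w h ≤ load a := fun h hh => by
    obtain ⟨b, hb, hbh⟩ := hpt h hh
    exact (single_le_sum (fun h' _ => hw h') (mem_filter.2 ⟨hh, hbh⟩)).trans (hmax b hb)
  rcases (sum_nonneg fun h _ => hw h : 0 ≤ load a).eq_or_lt with h0 | hpos
  · rw [← h0, mul_zero]
    exact sum_nonpos fun h hh => h0 ▸ hle h hh
  · have := sum_le_pqMatchingBound hq hqp hprop hne hrepc hrep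
      (m := fun h => w h / load a) (fun h => div_nonneg (hw h) hpos.le) fun b hb => by
        rw [← sum_div, div_le_one hpos]; exact hmax b hb
    rwa [← sum_div, div_le_iff₀ hpos] at this

theorem exists_fractional_cover_of_hasPQProperty {p q : ℕ} (hq : 2 ≤ q) (hqp : q ≤ p)
    (hprop : HasPQProperty H p q) (hne : ∀ h ∈ H, h.Nonempty) (hrepc : ∀ h ∈ H, #(rep h) ≤ d)
    (hrep : ∀ h ∈ H, h = ⋃ I ∈ rep h, Set.Icc I.1 I.2) :
    ∃ c : ℝ → ℝ, 0 ≤ c ∧ (∀ h ∈ H, 1 ≤ ∑ a ∈ leftEndpoints H rep with a ∈ h, c a) ∧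
      ∑ a ∈ leftEndpoints H rep, c a ≤ pqMatchingBound p q d := by
  rcases H.eq_empty_or_nonempty with rfl | hH
  · exact ⟨0, le_rfl, by simp, by simpa [leftEndpoints] using pqMatchingBound_nonneg p q d⟩
  obtain ⟨c, hc0, hc, hcB⟩ := exists_fractional_cover H (leftEndpoints H rep)
    (fun h a => if a ∈ h then 1 else 0) (pqMatchingBound_nonneg p q d) fun w hw => by
      simpa [sum_filter] using exists_mem_leftEndpoints_sum_le_mul hq hqp hprop hne hrepc hrep hH hw
  exact ⟨c, hc0, fun h hh => by simpa [sum_filter] using hc h hh, hcB.le⟩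

end DInterval

theorem natCast_mul_rpow_le {q : ℕ} (hq : 2 ≤ q) (p d : ℕ) :
    (d : ℝ) * (2 * d * p ^ q / (q - 1)! : ℝ) ^ ((q - 1 : ℕ) : ℝ)⁻¹ ≤
      (2 : ℝ) ^ (1 / ((q : ℝ) - 1)) * (Real.exp 1 * p) ^ ((q : ℝ) / ((q : ℝ) - 1)) / q *
        (d : ℝ) ^ ((q : ℝ) / ((q : ℝ) - 1)) := by
  obtain ⟨n, rfl⟩ : ∃ n, q = n + 1 := ⟨q - 1, by omega⟩
  have hn : n ≠ 0 := by omega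
  have hn' : (n : ℝ) ≠ 0 := by exact_mod_cast hn
  simp only [Nat.add_sub_cancel, Nat.cast_add, Nat.cast_one, add_sub_cancel_right]
  have hpow : ∀ {x : ℝ} (y : ℝ), 0 ≤ x → (x ^ (y / n)) ^ n = x ^ y := fun y hx => by
    rw [← Real.rpow_natCast _ n, ← Real.rpow_mul hx, div_mul_cancel₀ _ hn']
  have hsucc : ∀ x : ℝ, x ^ ((n : ℝ) + 1) = x ^ (n + 1) := fun x => by
    rw [← Real.rpow_natCast]; push_cast; rfl
  have hfact : ((n : ℝ) + 1) ^ n ≤ Real.exp 1 ^ (n + 1) * n ! := by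
    have := Real.pow_div_factorial_le_exp ((n + 1 : ℕ) : ℝ) (by positivity) (n + 1)
    rw [← Real.exp_one_pow, Nat.factorial_succ, div_le_iff₀ (by positivity)] at this
    push_cast at this
    nlinarith [pow_succ ((n : ℝ) + 1) n]
  rw [← pow_le_pow_iff_left₀ (by positivity) (by positivity) hn, mul_pow,
    Real.rpow_inv_natCast_pow (by positivity) hn, mul_pow, div_pow, mul_pow, hpow _ zero_le_two,
    hpow _ (by positivity), hpow _ (by positivity), Real.rpow_one, hsucc, hsucc]
  have hX : 0 ≤ (d : ℝ) ^ (n + 1) * p ^ (n + 1) := by positivity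
  calc (d : ℝ) ^ n * (2 * d * p ^ (n + 1) / n !) = 2 * ((d : ℝ) ^ (n + 1) * p ^ (n + 1)) / n ! := by
        ring
    _ ≤ 2 * ((d : ℝ) ^ (n + 1) * p ^ (n + 1)) * Real.exp 1 ^ (n + 1) / ((n : ℝ) + 1) ^ n := by
        rw [div_le_div_iff₀ (by positivity) (by positivity)]
        nlinarith [mul_le_mul_of_nonneg_left hfact hX]
    _ = _ := by ring

theorem cover_of_pq_property_general (p q d : ℕ) (hq : 2 ≤ q) (hqp : q ≤ p)
    (H : Finset (Set ℝ)) (hH : ∀ s ∈ H, IsDInterval d s)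
    (hprop : HasPQProperty H p q) :
    (coverNum H : ℝ) ≤ max
      ((2 : ℝ) ^ (1 / ((q : ℝ) - 1)) * (Real.exp 1 * p) ^ ((q : ℝ) / ((q : ℝ) - 1)) / q
        * (d : ℝ) ^ ((q : ℝ) / ((q : ℝ) - 1)) + d)
      (2 * (p : ℝ) ^ 2 * d) := by
  choose! rep hrepc hrep using fun h hh => (hH h hh).2
  obtain ⟨c, hc0, hcov, hcB⟩ := exists_fractional_cover_of_hasPQProperty hq hqp hprop
    (fun h hh => (hH h hh).1) hrepc hrep
  obtain ⟨C, hC, hCcard⟩ := exists_cover_card_le hrepc hrep hc0 hcov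
  have hτ : coverNum H ≤ #C := Nat.sInf_le ⟨C, rfl, hC⟩
  calc (coverNum H : ℝ) ≤ #C := by exact_mod_cast hτ
    _ ≤ d * pqMatchingBound p q d := hCcard.trans (mul_le_mul_of_nonneg_left hcB d.cast_nonneg)
    _ ≤ _ := by
      rw [pqMatchingBound, mul_max_of_nonneg _ _ d.cast_nonneg]
      exact max_le (le_max_of_le_right (le_of_eq (by ring))) (le_max_of_le_left
        ((natCast_mul_rpow_le hq p d).trans (le_add_of_nonneg_right d.cast_nonneg)))

theorem cover_of_pq_property (p q d : ℕ) (hq : 2 ≤ q) (hqp : q ≤ p) (hd : 1 ≤ d)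
    (H : Finset (Set ℝ)) (hH : ∀ s ∈ H, IsDInterval d s) (hcard : p ≤ H.card)
    (hprop : HasPQProperty H p q) :
    (coverNum H : ℝ) ≤ max
      ((2 : ℝ) ^ (1 / ((q : ℝ) - 1)) * (Real.exp 1 * p) ^ ((q : ℝ) / ((q : ℝ) - 1)) / q
        * (d : ℝ) ^ ((q : ℝ) / ((q : ℝ) - 1)) + d)
      (2 * (p : ℝ) ^ 2 * d) :=
  cover_of_pq_property_general p q d hq hqp H hH hprop
end

section
/- Let G be a finite tree, let p ≥ 2 and d ≥ 1 be integers, and let H be a finite family of nonempty subsets of the vertex set of G, each inducing a subgraph of G with at most d connected components, with |H| ≥ p. If H satisfies the (p,p) property, then the covering number satisfies τ(H) < p^{1/(p-1)} · d^{p/(p-1)} + d. -/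
/-- A finite family `H` of vertex sets satisfies the `(p,q)` property if among
every `p` distinct members of `H` some `q` have a vertex in common. -/
def VertexPQProperty {V : Type*} (H : Finset (Set V)) (p q : ℕ) : Prop :=
  ∀ S ⊆ H, S.card = p → ∃ T ⊆ S, T.card = q ∧ (⋂ h ∈ T, (h : Set V)).Nonempty

/-- The covering number `τ(H)`: the minimum cardinality of a set of vertices
meeting every member of `H`. -/
noncomputable def vertexCoverNum {V : Type*} (H : Finset (Set V)) : ℕ :=
  sInf { n : ℕ | ∃ C : Finset V, C.card = n ∧ ∀ h ∈ H, ∃ v ∈ C, v ∈ h }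

/-- The fractional covering number `τ*(H)`: the infimum of total weights of
fractional covers of `H`. -/
noncomputable def vertexFracCoverNum {V : Type*} [Fintype V] (H : Finset (Set V)) : ℝ :=
  sInf { t : ℝ | ∃ w : V → ℝ, (∀ v, 0 ≤ w v) ∧
    (∀ h ∈ H, 1 ≤ ∑ v, Set.indicator h w v) ∧ t = ∑ v, w v }

/-!
Fix a root of the tree. A fractional cover `w` of `H` gives each member weight `≥ 1`, hence one
of its at most `d` components weight `≥ 1/d`; components are subtrees, and greedily choosing
deepest vertices whose descendants weigh `≥ 1/d` (then deleting those descendants) hits every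
such subtree with at most `d · ∑ w` vertices. So `τ ≤ d τ*`.

By the `(p,p)` property any `p` members, repetitions allowed, share a vertex `v`, and the deepest
of the top vertices of their components through `v` lies in all of them. Expanding `(∑ y)^p` for
a fractional matching `y` over `p`-tuples of members and charging each tuple to such a top gives
`(∑ y)^p ≤ p d ∑ y`, so `ν* ≤ (pd)^(1/(p-1))`. With LP duality `τ* = ν*` this yields
`τ ≤ d (pd)^(1/(p-1)) = p^(1/(p-1)) d^(p/(p-1))`.
-/

lemma ContinuousLinearMap.apply_eq_sum_mul_apply_single {ι : Type*} [Fintype ι] [DecidableEq ι]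
    (f : StrongDual ℝ (ι → ℝ)) (z : ι → ℝ) : f z = ∑ i, z i * f (Pi.single i 1) := by
  rw [← f.coe_coe, f.toLinearMap.pi_apply_eq_sum_univ z]
  refine Finset.sum_congr rfl fun i _ => ?_
  simp only [smul_eq_mul, ContinuousLinearMap.coe_coe]
  congr 2
  ext j
  simp [Pi.single_apply, eq_comm]

lemma ContinuousLinearMap.apply_single_nonneg_of_lt {ι : Type*} [DecidableEq ι]
    (f : StrongDual ℝ (ι → ℝ)) {c : ι → ℝ} {b : ℝ} (hf : ∀ z ∈ Set.Ici c, b < f z) (i : ι) :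
    0 ≤ f (Pi.single i 1) := by
  by_contra! hi
  let l := (f c - b) / -f (Pi.single i 1)
  have hl : 0 ≤ l := div_nonneg (by linarith [hf c Set.self_mem_Ici]) (by linarith)
  have hcl := hf (c + l • Pi.single i 1)
    (Set.mem_Ici.mpr (le_add_of_nonneg_right (smul_nonneg hl (Pi.single_nonneg.mpr zero_le_one))))
  have hl' : l * f (Pi.single i 1) = -(f c - b) := by
    simp only [l]
    field_simp [hi.ne]
  rw [map_add, map_smul, smul_eq_mul] at hcl
  linarith

section Fractional

variable {ι V : Type*}

def IsFractionalCover [Fintype V] (s : ι → Set V) (w : V → ℝ) : Prop :=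
  0 ≤ w ∧ ∀ i, 1 ≤ ∑ v, (s i).indicator w v

def IsFractionalMatching [Fintype ι] (s : ι → Set V) (y : ι → ℝ) : Prop :=
  0 ≤ y ∧ ∀ v, ∑ i, {i | v ∈ s i}.indicator y i ≤ 1

lemma exists_mem_ne_zero_of_le_sum_indicator [Fintype V] {S : Set V} {w : V → ℝ} {δ : ℝ}
    (hδ : 0 < δ) (h : δ ≤ ∑ v, S.indicator w v) : ∃ v ∈ S, w v ≠ 0 := by
  obtain ⟨v, -, hv⟩ := Finset.exists_ne_zero_of_sum_ne_zero (hδ.trans_le h).ne'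
  have hvS := Set.mem_of_indicator_ne_zero hv
  exact ⟨v, hvS, by rwa [Set.indicator_of_mem hvS] at hv⟩

lemma sum_indicator_smul {α : Type*} [Fintype α] (S : Set α) (c : ℝ) (f : α → ℝ) :
    ∑ x, S.indicator (c • f) x = c * ∑ x, S.indicator f x := by
  rw [Finset.mul_sum]
  exact Finset.sum_congr rfl fun x _ => Set.indicator_const_smul_apply S c f x

section Finite

variable [Fintype ι] [Fintype V]

lemma sum_sum_indicator_mem (T : ι → Finset V) (y : ι → ℝ) :
    ∑ u, ∑ i, {i | u ∈ T i}.indicator y i = ∑ i, (T i).card * y i := by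
  classical
  simp only [Set.indicator_apply, Set.mem_ofPred_eq]
  rw [Finset.sum_comm]
  refine Finset.sum_congr rfl fun i _ => ?_
  rw [Finset.sum_ite_mem, Finset.univ_inter, Finset.sum_const, nsmul_eq_mul]

/-- Expand `(∑ y)^p` over `p`-tuples of sets and charge each tuple to a marked vertex of one of
its sets that lies in all of them. -/
theorem IsFractionalMatching.sum_pow_le {s : ι → Set V} {y : ι → ℝ}
    (hy : IsFractionalMatching s y) {p d : ℕ} (T : ι → Finset V)
    (hTd : ∀ i, (T i).card ≤ d) (hT : ∀ f : Fin p → ι, ∃ j, ∃ u ∈ T (f j), ∀ k, u ∈ s (f k)) :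
    (∑ i, y i) ^ p ≤ p * d * ∑ i, y i := by
  classical
  let topLoad (u : V) := ∑ i, {i | u ∈ T i}.indicator y i
  let g (j : Fin p) (u : V) (k : Fin p) : ι → ℝ :=
    if k = j then {i | u ∈ T i}.indicator y else {i | u ∈ s i}.indicator y
  have hg0 : ∀ j u k i, 0 ≤ g j u k i := fun j u k i => by
    unfold g; split_ifs <;> exact Set.indicator_nonneg (fun i _ => hy.1 i) i
  have htuple : ∀ f : Fin p → ι, ∏ k, y (f k) ≤ ∑ j, ∑ u, ∏ k, g j u k (f k) := by
    intro f
    obtain ⟨j, u, hu, hfu⟩ := hT f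
    have hgf : ∏ k, g j u k (f k) = ∏ k, y (f k) := Finset.prod_congr rfl fun k _ => by
      unfold g
      split_ifs with hkj
      · subst hkj; exact Set.indicator_of_mem (s := {i | u ∈ T i}) hu y
      · exact Set.indicator_of_mem (s := {i | u ∈ s i}) (hfu k) y
    rw [← hgf]
    refine le_trans ?_ (Finset.single_le_sum (fun j _ => Finset.sum_nonneg fun u _ =>
      Finset.prod_nonneg fun k _ => hg0 _ _ _ _) (Finset.mem_univ j))
    exact Finset.single_le_sum (fun u _ => Finset.prod_nonneg fun k _ => hg0 _ _ _ _)
      (f := fun u => ∏ k, g j u k (f k)) (Finset.mem_univ u)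
  have hju : ∀ j u, ∑ f : Fin p → ι, ∏ k, g j u k (f k) ≤ topLoad u := by
    intro j u
    rw [← Fintype.prod_sum]
    calc ∏ k, ∑ i, g j u k i ≤ ∏ k, if k = j then topLoad u else 1 := by
          refine Finset.prod_le_prod (fun k _ => Finset.sum_nonneg fun i _ => hg0 _ _ _ _)
            fun k _ => ?_
          unfold g
          split_ifs
          · exact le_rfl
          · exact hy.2 u
      _ = topLoad u := Fintype.prod_ite_eq' j _
  have htop : ∑ u, topLoad u ≤ d * ∑ i, y i := by
    rw [sum_sum_indicator_mem, Finset.mul_sum]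
    exact Finset.sum_le_sum fun i _ =>
      mul_le_mul_of_nonneg_right (by exact_mod_cast hTd i) (hy.1 i)
  calc (∑ i, y i) ^ p = ∑ f : Fin p → ι, ∏ k, y (f k) := by
        rw [← Fintype.prod_sum, Finset.prod_const, Finset.card_univ, Fintype.card_fin]
    _ ≤ ∑ f : Fin p → ι, ∑ j, ∑ u, ∏ k, g j u k (f k) := Finset.sum_le_sum fun f _ => htuple f
    _ = ∑ j, ∑ u, ∑ f : Fin p → ι, ∏ k, g j u k (f k) := by
        rw [Finset.sum_comm]; exact Finset.sum_congr rfl fun j _ => Finset.sum_comm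
    _ ≤ ∑ _j : Fin p, ∑ u, topLoad u :=
        Finset.sum_le_sum fun j _ => Finset.sum_le_sum fun u _ => hju j u
    _ ≤ p * d * ∑ i, y i := by
        rw [Finset.sum_const, Finset.card_univ, Fintype.card_fin, nsmul_eq_mul, mul_assoc]
        exact mul_le_mul_of_nonneg_left htop p.cast_nonneg

/-- Dividing `y` by its maximal load turns it into a fractional matching. -/
lemma exists_isFractionalMatching_lt_sum [Nonempty V] {s : ι → Set V}
    (hs : ∀ i, (s i).Nonempty) {y : ι → ℝ} (hy : 0 ≤ y) {t : ℝ} (ht : 0 < t)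
    (hload : ∀ v, ∑ i, {i | v ∈ s i}.indicator y i < t⁻¹ * ∑ i, y i) :
    ∃ y', IsFractionalMatching s y' ∧ t < ∑ i, y' i := by
  let load (v : V) := ∑ i, {i | v ∈ s i}.indicator y i
  obtain ⟨v₀, -, hv₀⟩ := Finset.univ.exists_max_image load Finset.univ_nonempty
  have hload_nonneg : 0 ≤ load v₀ :=
    Finset.sum_nonneg fun i _ => Set.indicator_nonneg (fun i _ => hy i) i
  have hy_le : ∀ i, y i ≤ load v₀ := fun i => by
    obtain ⟨v, hv⟩ := hs i
    calc y i = {i | v ∈ s i}.indicator y i := (Set.indicator_of_mem (s := {i | v ∈ s i}) hv y).symm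
      _ ≤ load v := Finset.single_le_sum (f := fun i => {i | v ∈ s i}.indicator y i)
          (fun i _ => Set.indicator_nonneg (fun i _ => hy i) i) (Finset.mem_univ i)
      _ ≤ load v₀ := hv₀ v (Finset.mem_univ v)
  have hpos : 0 < load v₀ := by
    have hsum : (0 : ℝ) < ∑ i, y i := by
      have := hload_nonneg.trans_lt (hload v₀)
      rw [← mul_zero t⁻¹] at this
      exact lt_of_mul_lt_mul_left this (inv_nonneg.mpr ht.le)
    obtain ⟨i, -, hi⟩ := Finset.exists_lt_of_sum_lt (s := Finset.univ) (f := 0) (g := y)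
      (by simpa using hsum)
    exact hi.trans_le (hy_le i)
  refine ⟨(load v₀)⁻¹ • y, ⟨smul_nonneg (inv_nonneg.mpr hpos.le) hy, fun v => ?_⟩, ?_⟩
  · rw [sum_indicator_smul, inv_mul_le_one₀ hpos]
    exact hv₀ v (Finset.mem_univ v)
  · have := hload v₀
    rw [lt_inv_mul_iff₀ ht] at this
    simp only [Pi.smul_apply, smul_eq_mul, ← Finset.mul_sum]
    rw [lt_inv_mul_iff₀ hpos, mul_comm]
    exact this

/-- `y` is the normal of a hyperplane separating the compact convex set of vectors `(w(s i))ᵢ`,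
`w` a probability vector, from the orthant `{z | ∀ i, t⁻¹ ≤ z i}`. -/
lemma exists_forall_sum_indicator_lt {s : ι → Set V} {t : ℝ} (ht : 0 < t)
    (hcover : ∀ w, IsFractionalCover s w → t < ∑ v, w v) :
    ∃ y : ι → ℝ, 0 ≤ y ∧ ∀ v, ∑ i, {i | v ∈ s i}.indicator y i < t⁻¹ * ∑ i, y i := by
  classical
  let A : (V → ℝ) →ₗ[ℝ] ι → ℝ :=
    { toFun w i := ∑ v, (s i).indicator w v
      map_add' w w' := by ext i; simp [Set.indicator_add', Finset.sum_add_distrib]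
      map_smul' c w := by ext i; exact sum_indicator_smul (s i) c w }
  let c : ι → ℝ := fun _ => t⁻¹
  have hdisj : Disjoint (A '' stdSimplex ℝ V) (Set.Ici c) := by
    refine Set.disjoint_left.mpr ?_
    rintro _ ⟨w, hw, rfl⟩ hAw
    refine (hcover (t • w) ⟨fun v => smul_nonneg ht.le (hw.1 v), fun i => ?_⟩).ne ?_
    · calc (1 : ℝ) = t * t⁻¹ := (mul_inv_cancel₀ ht.ne').symm
        _ ≤ t * ∑ v, (s i).indicator w v := by gcongr; exact hAw i
        _ = ∑ v, (s i).indicator (t • w) v := (sum_indicator_smul (s i) t w).symm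
    · simp [← Finset.mul_sum, hw.2]
  obtain ⟨f, a, b, hfa, hab, hfb⟩ := geometric_hahn_banach_compact_closed
    ((convex_stdSimplex ℝ V).linear_image A)
    ((isCompact_stdSimplex ℝ V).image A.continuous_of_finiteDimensional)
    (convex_Ici _) isClosed_Ici hdisj
  refine ⟨fun i => f (Pi.single i 1), f.apply_single_nonneg_of_lt hfb, fun v => ?_⟩
  have hv := (hfa _ ⟨_, single_mem_stdSimplex ℝ v, rfl⟩).trans
    (hab.trans (hfb c Set.self_mem_Ici))
  rw [f.apply_eq_sum_mul_apply_single, f.apply_eq_sum_mul_apply_single, ← Finset.mul_sum] at hv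
  refine lt_of_eq_of_lt (Finset.sum_congr rfl fun i _ => ?_) hv
  change _ = (∑ x, (s i).indicator (Pi.single v 1) x) * _
  rw [Finset.sum_eq_single v (fun x _ hx => by simp [hx]) (by simp)]
  by_cases hvi : v ∈ s i <;> simp [hvi]

theorem exists_isFractionalCover_sum_le {s : ι → Set V} (hs : ∀ i, (s i).Nonempty) {t : ℝ}
    (ht : 0 < t) (hmatch : ∀ y, IsFractionalMatching s y → ∑ i, y i ≤ t) :
    ∃ w, IsFractionalCover s w ∧ ∑ v, w v ≤ t := by
  rcases isEmpty_or_nonempty V with hV | hV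
  · exact ⟨0, ⟨le_rfl, fun i => (hs i).elim fun v _ => isEmptyElim v⟩, by simp [ht.le]⟩
  by_contra! hcover
  obtain ⟨y, hy, hload⟩ := exists_forall_sum_indicator_lt ht hcover
  obtain ⟨y', hy', hty'⟩ := exists_isFractionalMatching_lt_sum hs hy ht hload
  exact (hmatch y' hy').not_gt hty'

end Finite

end Fractional

lemma le_rpow_of_pow_le_mul {t a : ℝ} {p : ℕ} (ht : 0 ≤ t) (ha : 0 ≤ a) (hp : 2 ≤ p)
    (h : t ^ p ≤ a * t) : t ≤ a ^ (1 / ((p : ℝ) - 1)) := by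
  rcases ht.eq_or_lt with rfl | ht
  · positivity
  obtain ⟨n, rfl⟩ : ∃ n, p = n + 1 := ⟨p - 1, by omega⟩
  have htn : t ^ n ≤ a := le_of_mul_le_mul_right (by rwa [pow_succ] at h) ht
  rw [Nat.cast_succ, add_sub_cancel_right, one_div]
  calc t = (t ^ n) ^ (n⁻¹ : ℝ) := (Real.pow_rpow_inv_natCast ht.le (by omega)).symm
    _ ≤ a ^ (n⁻¹ : ℝ) := by gcongr

lemma VertexPQProperty.exists_mem_forall {V : Type*} {H : Finset (Set V)} {p : ℕ}
    (hH : VertexPQProperty H p p) (hp : p ≤ H.card) (f : Fin p → H) :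
    ∃ v, ∀ k, v ∈ (f k : Set V) := by
  classical
  obtain ⟨S, hfS, hSH, hS⟩ := Finset.exists_subsuperset_card_eq
    (s := Finset.univ.image fun k => (f k : Set V)) (fun _ h => by
      obtain ⟨k, -, rfl⟩ := Finset.mem_image.mp h
      exact (f k).2)
    (Finset.card_image_le.trans (by simp)) hp
  obtain ⟨T, hTS, hT, v, hv⟩ := hH S hSH hS
  obtain rfl : T = S := Finset.eq_of_subset_of_card_le hTS (hS.trans hT.symm).le
  exact ⟨v, fun k => Set.mem_iInter₂.mp hv _ (hfS (Finset.mem_image_of_mem _ (Finset.mem_univ k)))⟩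

namespace SimpleGraph

variable {V : Type*} {G : SimpleGraph V}

lemma exists_connectedComponent_inv_le_sum_indicator [Fintype V] {s : Set V} {d : ℕ}
    (hs : Nat.card (G.induce s).ConnectedComponent ≤ d) {w : V → ℝ}
    (hw : 1 ≤ ∑ v, s.indicator w v) :
    ∃ c : (G.induce s).ConnectedComponent,
      (d : ℝ)⁻¹ ≤ ∑ v, (Subtype.val '' c.supp).indicator w v := by
  classical
  have := Fintype.ofFinite (G.induce s).ConnectedComponent
  have hsplit : ∀ v, s.indicator w v =
      ∑ c : (G.induce s).ConnectedComponent, (Subtype.val '' c.supp).indicator w v := by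
    intro v
    by_cases hv : v ∈ s
    · rw [Set.indicator_of_mem hv,
        Finset.sum_eq_single ((G.induce s).connectedComponentMk ⟨v, hv⟩)]
      · refine (Set.indicator_of_mem ?_ w).symm
        exact ⟨⟨v, hv⟩, rfl, rfl⟩
      · rintro c - hc
        refine Set.indicator_of_notMem ?_ w
        rintro ⟨a, ha, rfl⟩
        exact hc ha.symm
      · simp
    · rw [Set.indicator_of_notMem hv]
      refine (Finset.sum_eq_zero fun c _ => Set.indicator_of_notMem ?_ w).symm
      rintro ⟨a, -, rfl⟩
      exact hv a.2
  rw [Finset.sum_congr rfl fun v _ => hsplit v, Finset.sum_comm] at hw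
  have hne := Finset.nonempty_of_sum_ne_zero (ne_of_gt (zero_lt_one.trans_le hw))
  obtain ⟨c, -, hc⟩ := Finset.exists_le_of_sum_le hne (f := fun _ => (d : ℝ)⁻¹)
    (g := fun c => ∑ v, (Subtype.val '' c.supp).indicator w v) <| by
    rw [Finset.sum_const, Finset.card_univ, nsmul_eq_mul, ← div_eq_mul_inv]
    refine (div_le_one_of_le₀ ?_ d.cast_nonneg).trans hw
    rw [← Nat.card_eq_fintype_card]
    exact_mod_cast hs
  exact ⟨c, hc⟩

namespace IsTree

section

variable (hG : G.IsTree)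

noncomputable def path (x y : V) : G.Walk x y := (hG.existsUnique_path x y).choose

lemma isPath_path (x y : V) : (hG.path x y).IsPath := (hG.existsUnique_path x y).choose_spec.1

lemma eq_path {x y : V} {q : G.Walk x y} (hq : q.IsPath) : q = hG.path x y :=
  (hG.existsUnique_path x y).choose_spec.2 q hq

lemma support_path_subset {x y : V} (q : G.Walk x y) : (hG.path x y).support ⊆ q.support := by
  classical
  rw [← hG.eq_path q.bypass_isPath]
  exact q.support_bypass_subset_support

lemma path_eq_takeUntil [DecidableEq V] {x y z : V} (hz : z ∈ (hG.path x y).support) :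
    hG.path x z = (hG.path x y).takeUntil z hz :=
  (hG.eq_path ((hG.isPath_path x y).takeUntil hz)).symm

lemma path_eq_dropUntil [DecidableEq V] {x y z : V} (hz : z ∈ (hG.path x y).support) :
    hG.path z y = (hG.path x y).dropUntil z hz :=
  (hG.eq_path ((hG.isPath_path x y).dropUntil hz)).symm

noncomputable def depth (r x : V) : ℕ := (hG.path r x).length

lemma depth_lt_of_mem_support {r x z : V} (hz : z ∈ (hG.path r x).support) (hzx : z ≠ x) :
    hG.depth r z < hG.depth r x := by
  classical
  rw [depth, depth, hG.path_eq_takeUntil hz]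
  exact Walk.length_takeUntil_lt_length hz hzx

lemma mem_support_path_of_depth_le {r v a b : V} (ha : a ∈ (hG.path r v).support)
    (hb : b ∈ (hG.path r v).support) (hba : hG.depth r b ≤ hG.depth r a) :
    a ∈ (hG.path b v).support := by
  classical
  rw [← (hG.path r v).take_spec hb, Walk.mem_support_append_iff, ← hG.path_eq_takeUntil hb,
    ← hG.path_eq_dropUntil hb] at ha
  rcases ha with ha | ha
  · obtain rfl : a = b := by
      by_contra hab
      exact (hG.depth_lt_of_mem_support ha hab).not_ge hba
    exact Walk.start_mem_support _
  · exact ha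

def descendants (r u : V) : Set V := {x | u ∈ (hG.path r x).support}

/-- The vertex sets of subtrees. -/
def IsPathClosed (S : Set V) : Prop := ∀ x ∈ S, ∀ y ∈ S, ∀ z ∈ (hG.path x y).support, z ∈ S

lemma isPathClosed_image_supp {s : Set V}
    (c : (G.induce s).ConnectedComponent) : hG.IsPathClosed (Subtype.val '' c.supp) := by
  classical
  rintro _ ⟨a, ha, rfl⟩ _ ⟨b, hb, rfl⟩ z hz
  obtain ⟨W⟩ := ConnectedComponent.exact (ha.trans hb.symm)
  have hzW := hG.support_path_subset (W.map (Embedding.induce s).toHom) hz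
  rw [Walk.support_map, List.mem_map] at hzW
  obtain ⟨z, hzW, rfl⟩ := hzW
  exact ⟨z, (ConnectedComponent.sound ⟨W.takeUntil z hzW⟩).symm.trans ha, rfl⟩

variable {hG}

lemma IsPathClosed.subset_descendants {S : Set V} (hS : hG.IsPathClosed S) {r x z : V}
    (hzS : z ∉ S) (hx : x ∈ S) (hxz : x ∈ hG.descendants r z) : S ⊆ hG.descendants r z := by
  intro y hy
  have hz := hG.support_path_subset ((hG.path r y).append (hG.path y x)) hxz
  rw [Walk.mem_support_append_iff] at hz
  exact hz.resolve_right fun hz => hzS (hS y hy x hx z hz)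

/-- The vertex of `S` closest to the root is a common ancestor of all of `S`. -/
lemma IsPathClosed.exists_subset_descendants [Finite V] {S : Set V} (hS : hG.IsPathClosed S)
    (hne : S.Nonempty) (r : V) : ∃ u ∈ S, S ⊆ hG.descendants r u := by
  obtain ⟨u, huS, humin⟩ := S.exists_min_image (hG.depth r) S.toFinite hne
  refine ⟨u, huS, fun y hy => ?_⟩
  by_cases hur : u = r
  · subst hur
    exact Walk.start_mem_support _
  classical
  have hnil : ¬(hG.path r u).Nil := fun h => hur h.eq.symm
  set z := (hG.path r u).penultimate
  have hzu : G.Adj z u := Walk.adj_penultimate hnil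
  have hz : z ∈ (hG.path r u).support := (hG.path r u).getVert_mem_support _
  have hzS : z ∉ S := fun hzS => (hG.depth_lt_of_mem_support hz hzu.ne).not_ge (humin z hzS)
  have hzy : z ∈ (hG.path r y).support := hS.subset_descendants hzS huS hz hy
  have hzy' : hG.path z y = Walk.cons hzu (hG.path u y) :=
    (hG.eq_path ((Walk.cons_isPath_iff _ _).2
      ⟨hG.isPath_path u y, fun h => hzS (hS u huS y hy z h)⟩)).symm
  have hu : u ∈ (hG.path z y).support := by simp [hzy']
  rw [hG.path_eq_dropUntil hzy] at hu
  exact (hG.path r y).support_dropUntil_subset_support hzy hu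

end

section

variable [Finite V] (hG : G.IsTree) (r : V)

/-- The vertex of a component of `G.induce s` closest to the root `r`. -/
noncomputable def gate {s : Set V} (c : (G.induce s).ConnectedComponent) : V :=
  ((hG.isPathClosed_image_supp c).exists_subset_descendants (c.nonempty_supp.image _) r).choose

variable {s : Set V} (c : (G.induce s).ConnectedComponent)

lemma gate_mem_image_supp : hG.gate r c ∈ Subtype.val '' c.supp :=
  ((hG.isPathClosed_image_supp c).exists_subset_descendants
    (c.nonempty_supp.image _) r).choose_spec.1

lemma image_supp_subset_descendants_gate :
    Subtype.val '' c.supp ⊆ hG.descendants r (hG.gate r c) :=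
  ((hG.isPathClosed_image_supp c).exists_subset_descendants
    (c.nonempty_supp.image _) r).choose_spec.2

/-- Among sets with a common vertex `v`, the deepest gate of their components containing `v`
lies in all of them. -/
lemma exists_gate_mem_forall {κ : Type*} [Finite κ] [Nonempty κ] (f : κ → Set V) {v : V}
    (hv : ∀ k, v ∈ f k) :
    ∃ j, ∃ c : (G.induce (f j)).ConnectedComponent, ∀ k, hG.gate r c ∈ f k := by
  let c k := (G.induce (f k)).connectedComponentMk ⟨v, hv k⟩
  have hvc k : v ∈ Subtype.val '' (c k).supp := ⟨⟨v, hv k⟩, rfl, rfl⟩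
  obtain ⟨j, -, hj⟩ := Set.univ.exists_max_image (fun k => hG.depth r (hG.gate r (c k)))
    Set.finite_univ Set.univ_nonempty
  refine ⟨j, c j, fun k => ?_⟩
  have hgate : hG.gate r (c j) ∈ (hG.path (hG.gate r (c k)) v).support :=
    hG.mem_support_path_of_depth_le (hG.image_supp_subset_descendants_gate r (c j) (hvc j))
      (hG.image_supp_subset_descendants_gate r (c k) (hvc k)) (hj k trivial)
  obtain ⟨a, -, ha⟩ := hG.isPathClosed_image_supp (c k) _ (hG.gate_mem_image_supp r (c k)) v
    (hvc k) _ hgate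
  exact ha ▸ a.2

end

variable [Fintype V]

lemma IsPathClosed.mem_or_disjoint_descendants {hG : G.IsTree} {S : Set V} (hS : hG.IsPathClosed S)
    {w : V → ℝ} (hw : 0 ≤ w) {δ : ℝ} (hSw : δ ≤ ∑ v, S.indicator w v) {r u : V}
    (hu : ∀ x, δ ≤ ∑ v, (hG.descendants r x).indicator w v → hG.depth r x ≤ hG.depth r u) :
    u ∈ S ∨ Disjoint S (hG.descendants r u) := by
  by_contra! h
  obtain ⟨huS, hdisj⟩ := h
  obtain ⟨x, hxS, hxu⟩ := Set.not_disjoint_iff.mp hdisj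
  obtain ⟨g, hgS, hSg⟩ := hS.exists_subset_descendants ⟨x, hxS⟩ r
  have hlt : hG.depth r u < hG.depth r g :=
    hG.depth_lt_of_mem_support (hS.subset_descendants huS hxS hxu hgS) fun h => huS (h ▸ hgS)
  exact hlt.not_ge <| hu g <| hSw.trans <|
    Finset.sum_le_sum fun v _ => Set.indicator_le_indicator_of_subset hSg hw v

/-- Greedily picking deepest vertices with heavy descendants, and deleting those descendants,
hits every subtree of weight at least `δ`. -/
theorem exists_finset_hitting_heavy_subtrees (hG : G.IsTree) {δ : ℝ} (hδ : 0 < δ) {w : V → ℝ}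
    (hw : 0 ≤ w) :
    ∃ C : Finset V, C.card * δ ≤ ∑ v, w v ∧
      ∀ S, hG.IsPathClosed S → δ ≤ ∑ v, S.indicator w v → ∃ c ∈ C, c ∈ S := by
  classical
  obtain ⟨r⟩ := hG.connected.nonempty
  induction hn : (Finset.univ.filter fun v => w v ≠ 0).card using Nat.strong_induction_on
    generalizing w with
  | _ n ih =>
  let heavy := Finset.univ.filter fun x => δ ≤ ∑ v, (hG.descendants r x).indicator w v
  rcases heavy.eq_empty_or_nonempty with hempty | hne
  · refine ⟨∅, by simpa using Finset.sum_nonneg fun v _ => hw v, fun S hS hSw => ?_⟩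
    obtain ⟨x, hxS, -⟩ := exists_mem_ne_zero_of_le_sum_indicator hδ hSw
    obtain ⟨g, -, hSg⟩ := hS.exists_subset_descendants ⟨x, hxS⟩ r
    have hg : g ∈ heavy := Finset.mem_filter.mpr ⟨Finset.mem_univ g, hSw.trans <|
      Finset.sum_le_sum fun v _ => Set.indicator_le_indicator_of_subset hSg hw v⟩
    simp [hempty] at hg
  obtain ⟨u, hu, hdeep⟩ := heavy.exists_max_image (hG.depth r) hne
  have huδ : δ ≤ ∑ v, (hG.descendants r u).indicator w v := (Finset.mem_filter.mp hu).2
  let D := hG.descendants r u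
  have hsupp : (Finset.univ.filter fun v => Dᶜ.indicator w v ≠ 0).card < n := by
    rw [← hn]
    refine Finset.card_lt_card ⟨fun v => ?_, fun hsub => ?_⟩
    · simp only [Finset.mem_filter, Finset.mem_univ, true_and]
      exact fun hv h => hv (by simp [h])
    · obtain ⟨v, hvD, hv⟩ := exists_mem_ne_zero_of_le_sum_indicator hδ huδ
      have := hsub (Finset.mem_filter.mpr ⟨Finset.mem_univ v, hv⟩)
      simp only [Finset.mem_filter, Finset.mem_univ, true_and, Set.indicator_apply_ne_zero] at this
      exact this.1 hvD
  obtain ⟨C, hC, hCS⟩ := ih _ hsupp (Set.indicator_nonneg fun v _ => hw v) rfl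
  refine ⟨insert u C, ?_, fun S hS hSw => ?_⟩
  · have hsplit : ∑ v, w v = ∑ v, D.indicator w v + ∑ v, Dᶜ.indicator w v := by
      rw [← Finset.sum_add_distrib]
      exact Finset.sum_congr rfl fun v _ => (congrFun (D.indicator_self_add_compl w) v).symm
    calc ((insert u C).card : ℝ) * δ ≤ (C.card + 1) * δ := by
          gcongr; exact_mod_cast C.card_insert_le u
      _ ≤ ∑ v, w v := by linarith
  rcases hS.mem_or_disjoint_descendants hw hSw
      (fun x hx => hdeep x (Finset.mem_filter.mpr ⟨Finset.mem_univ x, hx⟩)) with huS | hdisj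
  · exact ⟨u, Finset.mem_insert_self u C, huS⟩
  · have hSD : S ∩ Dᶜ = S := Set.inter_eq_left.mpr (Set.subset_compl_iff_disjoint_right.mpr hdisj)
    obtain ⟨c, hc, hcS⟩ := hCS S hS (by simpa only [Set.indicator_indicator, hSD] using hSw)
    exact ⟨c, Finset.mem_insert_of_mem hc, hcS⟩

theorem exists_cover_of_isFractionalCover (hG : G.IsTree) {ι : Type*} {s : ι → Set V} {d : ℕ}
    (hd : 0 < d)
    (hs : ∀ i, Nat.card (G.induce (s i)).ConnectedComponent ≤ d) {w : V → ℝ}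
    (hw : IsFractionalCover s w) :
    ∃ C : Finset V, (C.card : ℝ) ≤ d * ∑ v, w v ∧ ∀ i, ∃ c ∈ C, c ∈ s i := by
  obtain ⟨C, hC, hCS⟩ :=
    hG.exists_finset_hitting_heavy_subtrees (δ := (d : ℝ)⁻¹) (by positivity) hw.1
  refine ⟨C, ?_, fun i => ?_⟩
  · rwa [← div_eq_mul_inv, div_le_iff₀ (by positivity), mul_comm] at hC
  · obtain ⟨c, hc⟩ := exists_connectedComponent_inv_le_sum_indicator (hs i) (hw.2 i)
    obtain ⟨x, hxC, a, -, rfl⟩ := hCS _ (hG.isPathClosed_image_supp c) hc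
    exact ⟨_, hxC, a.2⟩

theorem sum_le_of_isFractionalMatching (hG : G.IsTree) {ι : Type*} [Fintype ι] {s : ι → Set V}
    {p d : ℕ} (hp : 2 ≤ p)
    (hd : ∀ i, Nat.card (G.induce (s i)).ConnectedComponent ≤ d)
    (hs : ∀ f : Fin p → ι, ∃ v, ∀ k, v ∈ s (f k)) {y : ι → ℝ} (hy : IsFractionalMatching s y) :
    ∑ i, y i ≤ ((p : ℝ) * d) ^ (1 / ((p : ℝ) - 1)) := by
  obtain ⟨r⟩ := hG.connected.nonempty
  have : Nonempty (Fin p) := ⟨⟨0, by omega⟩⟩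
  let T i := (Set.finite_range (hG.gate r (s := s i))).toFinset
  refine le_rpow_of_pow_le_mul (Finset.sum_nonneg fun i _ => hy.1 i) (by positivity) hp ?_
  refine hy.sum_pow_le T (fun i => ?_) fun f => ?_
  · rw [← Set.ncard_eq_toFinset_card, ← Nat.card_coe_set_eq]
    exact (Finite.card_range_le _).trans (hd i)
  · obtain ⟨v, hv⟩ := hs f
    obtain ⟨j, c, hc⟩ := hG.exists_gate_mem_forall r (fun k => s (f k)) hv
    exact ⟨j, hG.gate r c, by simp [T], hc⟩

end IsTree

end SimpleGraph

theorem tree_cover_of_pp_property {V : Type*} [Fintype V]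
    (G : SimpleGraph V) (hG : G.IsTree)
    (p d : ℕ) (hp : 2 ≤ p) (hd : 1 ≤ d)
    (H : Finset (Set V)) (hne : ∀ h ∈ H, h.Nonempty)
    (hcomp : ∀ h ∈ H, Nat.card (G.induce h).ConnectedComponent ≤ d)
    (hcard : p ≤ H.card)
    (hprop : VertexPQProperty H p p) :
    (vertexCoverNum H : ℝ) <
      (p : ℝ) ^ (1 / ((p : ℝ) - 1)) * (d : ℝ) ^ ((p : ℝ) / ((p : ℝ) - 1)) + d := by
  have hp1 : (1 : ℝ) < p := by exact_mod_cast hp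
  have hd0 : (0 : ℝ) < d := by exact_mod_cast hd
  let s (h : H) : Set V := h
  have hmatch (y) (hy : IsFractionalMatching s y) :
      ∑ h, y h ≤ ((p : ℝ) * d) ^ (1 / ((p : ℝ) - 1)) :=
    hG.sum_le_of_isFractionalMatching hp (fun h => hcomp h.1 h.2) (hprop.exists_mem_forall hcard) hy
  obtain ⟨w, hw, hwt⟩ := exists_isFractionalCover_sum_le (s := s) (fun h => hne h.1 h.2)
    (by positivity) hmatch
  obtain ⟨C, hC, hCH⟩ :=
    hG.exists_cover_of_isFractionalCover (s := s) hd (fun h => hcomp h.1 h.2) hw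
  have hτ : vertexCoverNum H ≤ C.card := Nat.sInf_le ⟨C, rfl, fun h hh => hCH ⟨h, hh⟩⟩
  have hexp : (p : ℝ) / (p - 1) = 1 + 1 / (p - 1) := by field_simp [(sub_pos.mpr hp1).ne']; ring
  calc (vertexCoverNum H : ℝ) ≤ C.card := by exact_mod_cast hτ
    _ ≤ d * ((p : ℝ) * d) ^ (1 / ((p : ℝ) - 1)) := hC.trans (by gcongr)
    _ = (p : ℝ) ^ (1 / ((p : ℝ) - 1)) * (d : ℝ) ^ ((p : ℝ) / ((p : ℝ) - 1)) := by
      rw [hexp, Real.rpow_add hd0, Real.rpow_one, Real.mul_rpow (by positivity) hd0.le]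
      ring
    _ < _ := lt_add_of_pos_right _ hd0
end

section
/- Let d ≥ 1 be an integer and let H be a finite family of d-intervals. Then the covering number and the fractional covering number satisfy τ(H) ≤ d · τ*(H). -/
/-!
Fix a fractional cover `w`. Each member of `H` is a union of at most `d` intervals carrying
total mass at least `1`, so one of these intervals carries mass at least `1/d`. A family of
intervals each of mass at least `c > 0` is pierced greedily: stab the interval with the leftmost
right endpoint `b` at `b`, discard everything it meets, and recurse on the intervals lying to the
right of `b`. The masses charged at successive steps live in disjoint parts of the line, so the
number of points is at most the total mass divided by `c`.
-/

open Finset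

variable {α : Type*}

noncomputable def mass (w : α →₀ ℝ) (s : Set α) : ℝ :=
  ∑ x ∈ w.support, s.indicator w x

section mass

variable {w : α →₀ ℝ} {s t : Set α}

@[simp]
lemma mass_empty : mass w ∅ = 0 := by
  simp [mass]

lemma mass_univ : mass w Set.univ = ∑ x ∈ w.support, w x := by
  simp [mass]

lemma nonempty_of_mass_pos (h : 0 < mass w s) : s.Nonempty := by
  contrapose! h
  simp [h]

lemma le_mass_of_mem (hw : ∀ x, 0 ≤ w x) {x : α} (hx : x ∈ s) : w x ≤ mass w s := by
  have hnonneg : ∀ y ∈ w.support, 0 ≤ s.indicator w y :=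
    fun y _ => Set.indicator_nonneg (fun y _ => hw y) y
  by_cases hxw : x ∈ w.support
  · rw [← Set.indicator_of_mem hx w]
    exact single_le_sum hnonneg hxw
  · rw [Finsupp.notMem_support_iff.mp hxw]
    exact sum_nonneg hnonneg

lemma mass_mono (hw : ∀ x, 0 ≤ w x) (hst : s ⊆ t) : mass w s ≤ mass w t :=
  sum_le_sum fun x _ => Set.indicator_le_indicator_of_subset hst hw x

lemma mass_union (hst : Disjoint s t) : mass w (s ∪ t) = mass w s + mass w t := by
  simp only [mass, Set.indicator_union_of_disjoint hst, sum_add_distrib]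

lemma mass_union_le (hw : ∀ x, 0 ≤ w x) : mass w (s ∪ t) ≤ mass w s + mass w t := by
  rw [← Set.union_sdiff_self, mass_union Set.disjoint_sdiff_right]
  gcongr
  exact mass_mono hw Set.sdiff_subset

lemma mass_add_mass_le (hw : ∀ x, 0 ≤ w x) {u : Set α} (hst : Disjoint s t) (hsu : s ⊆ u)
    (htu : t ⊆ u) : mass w s + mass w t ≤ mass w u := by
  rw [← mass_union hst]
  exact mass_mono hw (Set.union_subset hsu htu)

lemma mass_biUnion_le {ι : Type*} (hw : ∀ x, 0 ≤ w x) (P : Finset ι) (f : ι → Set α) :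
    mass w (⋃ i ∈ P, f i) ≤ ∑ i ∈ P, mass w (f i) := by
  classical
  induction P using Finset.induction_on with
  | empty => simp
  | insert i P hi ih =>
    rw [set_biUnion_insert, sum_insert hi]
    exact (mass_union_le hw).trans (by gcongr)

lemma exists_one_le_mass_of_nonempty (H : Finset (Set α)) (hH : ∀ h ∈ H, h.Nonempty) :
    ∃ w : α →₀ ℝ, (∀ x, 0 ≤ w x) ∧ ∀ h ∈ H, 1 ≤ mass w h := by
  classical
  choose p hp using hH
  set C := H.attach.image fun h => p h.1 h.2
  set w : α →₀ ℝ := Finsupp.indicator C fun _ _ => 1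
  have hw : ∀ x, 0 ≤ w x := fun x => by
    simp only [w, Finsupp.indicator_apply]
    split_ifs <;> norm_num
  refine ⟨w, hw, fun h hh => ?_⟩
  have hpC : p h hh ∈ C := mem_image_of_mem (fun h : H => p h.1 h.2) (mem_attach H ⟨h, hh⟩)
  calc 1 = w (p h hh) := by simp [w, Finsupp.indicator_apply, hpC]
    _ ≤ mass w h := le_mass_of_mem hw (hp h hh)

end mass

lemma IsDInterval.exists_Icc_mass {d : ℕ} {s : Set ℝ} (hs : IsDInterval d s) {w : ℝ →₀ ℝ}
    (hw : ∀ x, 0 ≤ w x) {c : ℝ} (hc : 0 < c) (hcs : c ≤ mass w s) :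
    ∃ I : ℝ × ℝ, Set.Icc I.1 I.2 ⊆ s ∧ c / d ≤ mass w (Set.Icc I.1 I.2) := by
  obtain ⟨-, P, hPd, rfl⟩ := hs
  obtain ⟨I₀, hI₀, -⟩ := Set.nonempty_biUnion.mp (nonempty_of_mass_pos (hc.trans_le hcs))
  have hsum : ∑ _ ∈ P, c / d ≤ ∑ I ∈ P, mass w (Set.Icc I.1 I.2) := calc
    ∑ _ ∈ P, c / d = #P / d * c := by rw [sum_const, nsmul_eq_mul]; ring
    _ ≤ c := mul_le_of_le_one_left hc.le (div_le_one_of_le₀ (by exact_mod_cast hPd) d.cast_nonneg)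
    _ ≤ _ := hcs.trans (mass_biUnion_le hw P _)
  obtain ⟨I, hI, hIc⟩ := exists_le_of_sum_le ⟨I₀, hI₀⟩ hsum
  exact ⟨I, fun x hx => Set.mem_biUnion hI hx, hIc⟩

lemma exists_pierce_Icc_of_le_mass {w : ℝ →₀ ℝ} (hw : ∀ x, 0 ≤ w x) {c : ℝ} (hc : 0 < c)
    (S : Finset (ℝ × ℝ)) (hS : ∀ I ∈ S, c ≤ mass w (Set.Icc I.1 I.2)) :
    ∃ C : Finset ℝ, (∀ I ∈ S, ∃ x ∈ C, x ∈ Set.Icc I.1 I.2) ∧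
      c * #C ≤ mass w (⋃ I ∈ S, Set.Icc I.1 I.2) := by
  classical
  induction S using Finset.strongInduction with
  | H S ih =>
  rcases S.eq_empty_or_nonempty with rfl | hSne
  · exact ⟨∅, by simp⟩
  obtain ⟨I₀, hI₀, hI₀min⟩ := S.exists_min_image Prod.snd hSne
  have hI₀ne : I₀.1 ≤ I₀.2 := Set.nonempty_Icc.mp (nonempty_of_mass_pos (hc.trans_le (hS I₀ hI₀)))
  set b := I₀.2
  set S' := S.filter (fun I => b < I.1)
  have hS'S : S' ⊂ S := filter_ssubset.mpr ⟨I₀, hI₀, hI₀ne.not_gt⟩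
  obtain ⟨C', hC'pierce, hC'mass⟩ :=
    ih S' hS'S fun I hI => hS I (mem_of_mem_filter I hI)
  refine ⟨insert b C', fun I hI => ?_, ?_⟩
  · by_cases hbI : b < I.1
    · obtain ⟨x, hx, hxI⟩ := hC'pierce I (mem_filter.mpr ⟨hI, hbI⟩)
      exact ⟨x, mem_insert_of_mem hx, hxI⟩
    · exact ⟨b, mem_insert_self b C', not_lt.mp hbI, hI₀min I hI⟩
  have hdisj : Disjoint (Set.Icc I₀.1 b) (⋃ I ∈ S', Set.Icc I.1 I.2) := by
    refine Set.disjoint_left.mpr fun x hx hx' => ?_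
    obtain ⟨I, hI, hxI⟩ := Set.mem_iUnion₂.mp hx'
    exact (hx.2.trans_lt (mem_filter.mp hI).2).not_ge hxI.1
  calc c * #(insert b C') ≤ c * (#C' + 1) := by
        gcongr
        exact_mod_cast card_insert_le b C'
    _ = c + c * #C' := by ring
    _ ≤ mass w (Set.Icc I₀.1 b) + mass w (⋃ I ∈ S', Set.Icc I.1 I.2) :=
        add_le_add (hS I₀ hI₀) hC'mass
    _ ≤ mass w (⋃ I ∈ S, Set.Icc I.1 I.2) :=
        mass_add_mass_le hw hdisj (fun x hx => Set.mem_biUnion hI₀ hx)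
          (Set.biUnion_subset_biUnion_left (coe_subset.mpr hS'S.subset))

theorem cover_le_d_mul_fracCover (d : ℕ) (hd : 1 ≤ d)
    (H : Finset (Set ℝ)) (hH : ∀ s ∈ H, IsDInterval d s) :
    (coverNum H : ℝ) ≤ (d : ℝ) * fracCoverNum H := by
  have hd₀ : (0 : ℝ) < d := by exact_mod_cast hd
  obtain ⟨w₀, hw₀, hw₀H⟩ := exists_one_le_mass_of_nonempty H fun h hh => (hH h hh).1
  rw [fracCoverNum, ← div_le_iff₀' hd₀]
  refine le_csInf ⟨_, w₀, hw₀, hw₀H, rfl⟩ ?_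
  rintro _ ⟨w, hw, hwH, rfl⟩
  choose! J hJh hJmass using fun h hh => (hH h hh).exists_Icc_mass hw one_pos (hwH h hh)
  obtain ⟨C, hCpierce, hCmass⟩ := exists_pierce_Icc_of_le_mass hw (c := 1 / d) (by positivity)
    (H.image J) (forall_mem_image.mpr hJmass)
  have hτC : coverNum H ≤ #C := Nat.sInf_le ⟨C, rfl, fun h hh => by
    obtain ⟨x, hx, hxJ⟩ := hCpierce (J h) (mem_image_of_mem J hh)
    exact ⟨x, hx, hJh h hh hxJ⟩⟩
  calc (coverNum H : ℝ) / d ≤ 1 / d * #C := by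
        rw [one_div_mul_eq_div]
        gcongr
    _ ≤ mass w (⋃ I ∈ H.image J, Set.Icc I.1 I.2) := hCmass
    _ ≤ mass w Set.univ := mass_mono hw (Set.subset_univ _)
    _ = _ := mass_univ
end

section
/- Let q be a prime power, let F be a finite field with q elements, and let k ≥ 2 be an integer. Let P be the k-dimensional projective space over F, i.e., the projectivization of the vector space F^{k+1}, and let H be the finite hypergraph whose vertex set is P and whose edges are the (k−1)-dimensional projective subspaces of P, i.e., the sets of points of P corresponding to the nonzero vectors of k-dimensional linear subspaces of F^{k+1}. Then the fractional covering number of H equals τ*(H) = q + 1/(∑_{i=0}^{k-1} q^i). -/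
open scoped BigOperators

open Module Projectivization

section Aux

variable {F : Type*} [Field F] [Fintype F]
variable {V : Type*} [AddCommGroup V] [Module F V] [Finite V]

private lemma projCardAux :
    Nat.card {v : V // v ≠ 0} = Nat.card (Projectivization F V) * (Fintype.card F - 1) := by
  classical
  have hbij : Function.Bijective (fun p : Projectivization F V × Fˣ =>
      (⟨(p.2 : F) • p.1.rep, smul_ne_zero (Units.ne_zero p.2) p.1.rep_nonzero⟩ :
        {v : V // v ≠ 0})) := by
    constructor
    · rintro ⟨y, a⟩ ⟨z, b⟩ h
      simp only [Subtype.mk.injEq] at h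
      have hyz : y = z := by
        have h1 : Projectivization.mk F ((a : F) • y.rep)
            (smul_ne_zero a.ne_zero y.rep_nonzero) = y := by
          conv_rhs => rw [← y.mk_rep]
          rw [Projectivization.mk_eq_mk_iff']
          exact ⟨(a : F), rfl⟩
        have h2 : Projectivization.mk F ((b : F) • z.rep)
            (smul_ne_zero b.ne_zero z.rep_nonzero) = z := by
          conv_rhs => rw [← z.mk_rep]
          rw [Projectivization.mk_eq_mk_iff']
          exact ⟨(b : F), rfl⟩
        rw [← h1, ← h2]
        congr 1
      subst hyz
      have : (a : F) = (b : F) := smul_left_injective F y.rep_nonzero h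
      exact Prod.ext rfl (Units.ext this)
    · rintro ⟨v, hv⟩
      obtain ⟨a, ha⟩ := Projectivization.exists_smul_eq_mk_rep F v hv
      refine ⟨⟨Projectivization.mk F v hv, a⁻¹⟩, Subtype.ext ?_⟩
      simp only
      rw [← ha, Units.smul_def a, smul_smul, Units.inv_mul, one_smul]
  rw [← Nat.card_congr (Equiv.ofBijective _ hbij), Nat.card_prod,
    Nat.card_eq_fintype_card (α := Fˣ), Fintype.card_units]

private lemma geom_nat {q : ℕ} (hq : 1 ≤ q) (d : ℕ) :
    (∑ i ∈ Finset.range d, q ^ i) * (q - 1) = q ^ d - 1 := by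
  have h1 : (1 : ℕ) ≤ q ^ d := Nat.one_le_pow _ _ hq
  zify [hq, h1]
  exact geom_sum_mul _ _

private lemma card_proj :
    Nat.card (Projectivization F V) = ∑ i ∈ Finset.range (finrank F V), Fintype.card F ^ i := by
  classical
  haveI := Fintype.ofFinite V
  have hq2 : 1 < Fintype.card F := Fintype.one_lt_card
  have hcard : Fintype.card V = Fintype.card F ^ finrank F V := card_eq_pow_finrank
  have hnz : Nat.card {v : V // v ≠ 0} = Fintype.card F ^ finrank F V - 1 := by
    rw [Nat.card_eq_fintype_card]
    have : Fintype.card {v : V // v ≠ 0} = Fintype.card V - Fintype.card {v : V // v = 0} :=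
      Fintype.card_subtype_compl _
    have h0 : Fintype.card {v : V // v = 0} = 1 := Fintype.card_subtype_eq 0
    have hpow : 1 ≤ Fintype.card F ^ finrank F V := Nat.one_le_pow _ _ (by omega)
    omega
  have key := projCardAux (F := F) (V := V)
  rw [hnz] at key
  have key2 := geom_nat (le_of_lt hq2) (finrank F V)
  have hpos : 0 < Fintype.card F - 1 := by omega
  exact Nat.eq_of_mul_eq_mul_right hpos (by rw [← key, key2])


private lemma card_proj_sub' (W : Submodule F V) :
    Nat.card {y : Projectivization F V | y.submodule ≤ W} =
      ∑ i ∈ Finset.range (finrank F W), Fintype.card F ^ i := by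
  classical
  have hinj : Function.Injective (Projectivization.map W.subtype W.injective_subtype) :=
    Projectivization.map_injective W.subtype W.injective_subtype
  have hrange : Set.range (Projectivization.map W.subtype W.injective_subtype) =
      {y : Projectivization F V | y.submodule ≤ W} := by
    ext y
    constructor
    · rintro ⟨z, rfl⟩
      induction z using Projectivization.ind with
      | h v hv =>
        rw [Projectivization.map_mk]
        simp only [Set.mem_setOf_eq, Projectivization.submodule_mk, Submodule.coe_subtype]
        rw [Submodule.span_singleton_le_iff_mem]
        exact v.2
    · intro hy
      have hrep : y.rep ∈ W := by
        rw [Set.mem_setOf_eq, Projectivization.submodule_eq,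
          Submodule.span_singleton_le_iff_mem] at hy
        exact hy
      have hne : (⟨y.rep, hrep⟩ : W) ≠ 0 :=
        fun h => y.rep_nonzero (congrArg Subtype.val h)
      refine ⟨Projectivization.mk F (⟨y.rep, hrep⟩ : W) hne, ?_⟩
      rw [Projectivization.map_mk]
      exact y.mk_rep
  calc Nat.card {y : Projectivization F V | y.submodule ≤ W}
      = Nat.card (Projectivization F W) := by
        rw [← hrange]
        exact (Nat.card_congr (Equiv.ofInjective _ hinj)).symm
    _ = _ := card_proj

private lemma finrank_ker' [FiniteDimensional F V] (f : Module.Dual F V) (hf : f ≠ 0) :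
    finrank F (LinearMap.ker f) = finrank F V - 1 := by
  have h := LinearMap.finrank_range_add_finrank_ker f
  have hr : LinearMap.range f = ⊤ := by
    obtain ⟨v, hv⟩ := DFunLike.ne_iff.mp hf
    simp only [LinearMap.zero_apply] at hv
    rw [Submodule.eq_top_iff']
    intro c
    exact ⟨(c / f v) • v, by rw [map_smul, smul_eq_mul, div_mul_cancel₀ _ hv]⟩
  rw [hr, finrank_top, finrank_self] at h
  omega

private lemma finrank_ann' [FiniteDimensional F V] (x : Projectivization F V) :
    finrank F (x.submodule.dualAnnihilator) = finrank F V - 1 := by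
  have h1 := x.finrank_submodule
  have h2 := Submodule.finrank_quotient_add_finrank x.submodule
  have h3 : finrank F (V ⧸ x.submodule) = finrank F x.submodule.dualAnnihilator :=
    (Subspace.quotEquivAnnihilator x.submodule).finrank_eq
  omega

private lemma incidence' (x : Projectivization F V) :
    {y : Projectivization F (Module.Dual F V) | x.submodule ≤ LinearMap.ker y.rep} =
      {y : Projectivization F (Module.Dual F V) |
        y.submodule ≤ x.submodule.dualAnnihilator} := by
  ext y
  simp only [Set.mem_setOf_eq, Projectivization.submodule_eq,
    Submodule.span_singleton_le_iff_mem, Submodule.mem_dualAnnihilator]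
  constructor
  · intro h w hw
    obtain ⟨c, rfl⟩ := Submodule.mem_span_singleton.mp hw
    rw [map_smul, LinearMap.mem_ker.mp h, smul_zero]
  · intro h
    exact LinearMap.mem_ker.mpr (h _ (Submodule.mem_span_singleton_self _))

end Aux


/-- The fractional covering number of the hypergraph whose vertices are the
points of the `k`-dimensional projective space over a finite field `F` with
`q` elements, and whose edges are the `(k-1)`-dimensional projective subspaces
(i.e. the point sets of `k`-dimensional linear subspaces of `F^{k+1}`),
equals `q + 1/(1 + q + ⋯ + q^{k-1})`. -/
theorem projective_space_fracCoverNum (F : Type*) [Field F] [Fintype F]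
    (q : ℕ) (hq : Fintype.card F = q) (k : ℕ) (hk : 2 ≤ k) :
    sInf { t : ℝ | ∃ w : Projectivization F (Fin (k + 1) → F) → ℝ,
        (∀ x, 0 ≤ w x) ∧
        (∀ W : Submodule F (Fin (k + 1) → F), Module.finrank F W = k →
          1 ≤ ∑ᶠ x ∈ {y : Projectivization F (Fin (k + 1) → F) | y.submodule ≤ W}, w x) ∧
        t = ∑ᶠ x, w x } =
      (q : ℝ) + 1 / (∑ i ∈ Finset.range k, (q : ℝ) ^ i) := by
  classical
  have hq2 : 2 ≤ q := hq ▸ Fintype.one_lt_card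
  set V := (Fin (k + 1) → F) with hV
  haveI : Finite (Module.Dual F V) := Module.finite_of_finite F
  haveI : Finite (Projectivization F V) := Quotient.finite _
  haveI : Finite (Projectivization F (Module.Dual F V)) := Quotient.finite _
  haveI : Fintype (Projectivization F V) := Fintype.ofFinite _
  haveI : Fintype (Projectivization F (Module.Dual F V)) := Fintype.ofFinite _
  have hfV : finrank F V = k + 1 := Module.finrank_fin_fun F
  have hfD : finrank F (Module.Dual F V) = k + 1 := by
    rw [Subspace.dual_finrank_eq, hfV]
  set mR : ℝ := ∑ i ∈ Finset.range k, (q : ℝ) ^ i with hmR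
  set NR : ℝ := ∑ i ∈ Finset.range (k + 1), (q : ℝ) ^ i with hNR
  have hq0 : (0 : ℝ) < q := by exact_mod_cast (by omega : 0 < q)
  have hmR_pos : 0 < mR := Finset.sum_pos (fun i _ => pow_pos hq0 i)
    ⟨0, Finset.mem_range.mpr (by omega)⟩
  have hNR_eq : NR = q * mR + 1 := geom_sum_succ
  -- cardinality of edge point-sets
  have cardEdge : ∀ W : Submodule F V, finrank F W = k →
      ((Set.toFinset {y : Projectivization F V | y.submodule ≤ W}).card : ℝ) = mR := by
    intro W hW
    have h := card_proj_sub' (F := F) W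
    rw [hW, hq] at h
    rw [Set.toFinset_card, ← Nat.card_eq_fintype_card, h]
    push_cast
    rfl
  -- total number of points
  have cardP : ((Fintype.card (Projectivization F V)) : ℝ) = NR := by
    have h := card_proj (F := F) (V := V)
    rw [hfV, hq] at h
    rw [← Nat.card_eq_fintype_card, h]
    push_cast
    rfl
  -- number of dual points (hyperplanes)
  have cardQ : ((Fintype.card (Projectivization F (Module.Dual F V))) : ℝ) = NR := by
    have h := card_proj (F := F) (V := Module.Dual F V)
    rw [hfD, hq] at h
    rw [← Nat.card_eq_fintype_card, h]
    push_cast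
    rfl
  -- incidence count: hyperplanes through a point
  have cardInc : ∀ x : Projectivization F V,
      ((Finset.univ.filter (fun y : Projectivization F (Module.Dual F V) =>
        x.submodule ≤ LinearMap.ker y.rep)).card : ℝ) = mR := by
    intro x
    have h1 : (Finset.univ.filter (fun y : Projectivization F (Module.Dual F V) =>
        x.submodule ≤ LinearMap.ker y.rep)).card
        = Nat.card {y : Projectivization F (Module.Dual F V) |
            x.submodule ≤ LinearMap.ker y.rep} := by
      rw [Nat.card_eq_fintype_card, Fintype.card_subtype]
      simp only [Set.mem_setOf_eq]
    have h2 := card_proj_sub' (F := F) (x.submodule.dualAnnihilator)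
    have h3 : finrank F (x.submodule.dualAnnihilator) = k := by
      rw [finrank_ann' x, hfV]
      omega
    rw [h1, incidence' x, h2, h3, hq]
    push_cast
    rfl
  -- the uniform weight is feasible
  have hmem : (q : ℝ) + 1 / mR ∈ { t : ℝ | ∃ w : Projectivization F V → ℝ,
      (∀ x, 0 ≤ w x) ∧
      (∀ W : Submodule F V, Module.finrank F W = k →
        1 ≤ ∑ᶠ x ∈ {y : Projectivization F V | y.submodule ≤ W}, w x) ∧
      t = ∑ᶠ x, w x } := by
    refine ⟨fun _ => 1 / mR, fun _ => by positivity, ?_, ?_⟩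
    · intro W hW
      rw [← Set.coe_toFinset {y : Projectivization F V | y.submodule ≤ W},
        finsum_mem_coe_finset, Finset.sum_const, nsmul_eq_mul, cardEdge W hW,
        mul_one_div, div_self (ne_of_gt hmR_pos)]
    · rw [finsum_eq_sum_of_fintype, Finset.sum_const, nsmul_eq_mul, Finset.card_univ,
        cardP, hNR_eq]
      field_simp
  -- every feasible weight has total at least q + 1/mR
  have hlb : ∀ t ∈ { t : ℝ | ∃ w : Projectivization F V → ℝ,
      (∀ x, 0 ≤ w x) ∧
      (∀ W : Submodule F V, Module.finrank F W = k →
        1 ≤ ∑ᶠ x ∈ {y : Projectivization F V | y.submodule ≤ W}, w x) ∧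
      t = ∑ᶠ x, w x }, (q : ℝ) + 1 / mR ≤ t := by
    rintro t ⟨w, hw0, hcon, rfl⟩
    rw [finsum_eq_sum_of_fintype]
    have key : ∀ y : Projectivization F (Module.Dual F V),
        (1 : ℝ) ≤ ∑ x ∈ Finset.univ.filter
          (fun x : Projectivization F V => x.submodule ≤ LinearMap.ker y.rep), w x := by
      intro y
      have hker : finrank F (LinearMap.ker y.rep) = k := by
        rw [finrank_ker' y.rep y.rep_nonzero, hfV]
        omega
      have h1 := hcon (LinearMap.ker y.rep) hker
      rwa [← Set.coe_toFinset {x : Projectivization F V | x.submodule ≤ LinearMap.ker y.rep},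
        finsum_mem_coe_finset, Set.toFinset_setOf] at h1
    have exchange : ∑ y : Projectivization F (Module.Dual F V),
        ∑ x ∈ Finset.univ.filter
          (fun x : Projectivization F V => x.submodule ≤ LinearMap.ker y.rep), w x
        = mR * ∑ x : Projectivization F V, w x := by
      simp_rw [Finset.sum_filter]
      rw [Finset.sum_comm]
      rw [Finset.mul_sum]
      refine Finset.sum_congr rfl fun x _ => ?_
      rw [← Finset.sum_filter, Finset.sum_const, nsmul_eq_mul, cardInc x]
    have hge : NR ≤ mR * ∑ x : Projectivization F V, w x := by
      have h4 : ∑ _y : Projectivization F (Module.Dual F V), (1 : ℝ)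
          ≤ ∑ y : Projectivization F (Module.Dual F V),
            ∑ x ∈ Finset.univ.filter
              (fun x : Projectivization F V => x.submodule ≤ LinearMap.ker y.rep), w x :=
        Finset.sum_le_sum fun y _ => key y
      rw [exchange] at h4
      calc NR = ∑ _y : Projectivization F (Module.Dual F V), (1 : ℝ) := by
            rw [Finset.sum_const, nsmul_eq_mul, mul_one, Finset.card_univ, cardQ]
        _ ≤ _ := h4
    have : (q : ℝ) + 1 / mR = NR / mR := by
      rw [hNR_eq, add_div, mul_div_cancel_right₀ _ (ne_of_gt hmR_pos)]
    rw [this, div_le_iff₀ hmR_pos]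
    linarith [hge]
  exact le_antisymm
    (csInf_le ⟨(q : ℝ) + 1 / mR, hlb⟩ hmem)
    (le_csInf ⟨_, hmem⟩ hlb)
end

section
/- Let G be a finite tree, let p ≥ 2, n ≥ 1 and k ≥ 1 be integers, and let h_1, …, h_n be (not necessarily distinct) nonempty subsets of the vertex set of G, each inducing a connected subgraph of G (i.e., each h_i is the vertex set of a subtree of G). Suppose that at least k of the p-element subsets S ⊆ {1, …, n} satisfy ⋂_{i ∈ S} h_i ≠ ∅. Then there exists a vertex v of G such that v ∈ h_i for at least ((p−1)! · k/n)^{1/(p−1)} + 1 indices i ∈ {1, …, n}. -/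
section SubtreeAux
open SimpleGraph


variable {V : Type*} [DecidableEq V] {G : SimpleGraph V}

/-- In a tree, any path has length equal to the distance between its endpoints. -/
lemma tree_path_length (hG : G.IsTree) {u v : V} (P : G.Walk u v) (hP : P.IsPath) :
    P.length = G.dist u v := by
  obtain ⟨Q, hQ, hlen⟩ := hG.isConnected.exists_path_of_dist u v
  have h2 := hG.IsAcyclic.path_unique ⟨P, hP⟩ ⟨Q, hQ⟩
  have h3 : P = Q := congrArg Subtype.val h2
  rw [h3, hlen]

/-- A path between two vertices of a connected induced subgraph stays in it. -/
lemma tree_path_mem (hG : G.IsTree) {h : Set V} (hc : (G.induce h).Connected)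
    {u v : V} (hu : u ∈ h) (hv : v ∈ h) (P : G.Walk u v) (hP : P.IsPath) :
    ∀ x ∈ P.support, x ∈ h := by
  obtain ⟨W0⟩ := hc.preconnected ⟨u, hu⟩ ⟨v, hv⟩
  let f : G.induce h →g G := ⟨Subtype.val, fun a => a⟩
  let W : G.Walk u v := W0.map f
  have hWsupp : ∀ x ∈ W.support, x ∈ h := by
    intro x hx
    rw [SimpleGraph.Walk.support_map, List.mem_map] at hx
    obtain ⟨y, _, rfl⟩ := hx
    exact y.2
  have h2 := hG.IsAcyclic.path_unique ⟨P, hP⟩ ⟨W.bypass, W.bypass_isPath⟩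
  have h3 : P = W.bypass := congrArg Subtype.val h2
  intro x hx
  rw [h3] at hx
  exact hWsupp x (W.support_bypass_subset hx)

/-- takeUntil / dist facts along a path in a tree. -/
lemma tree_dist_mono (hG : G.IsTree) {u v : V} (P : G.Walk u v) (hP : P.IsPath)
    {x : V} (hx : x ∈ P.support) :
    G.dist u x ≤ G.dist u v ∧ (G.dist u v ≤ G.dist u x → x = v) := by
  have hT := hP.takeUntil hx
  have hlenT := tree_path_length hG _ hT
  have hspec := P.take_spec hx
  have hlen : (P.takeUntil x hx).length + (P.dropUntil x hx).length = P.length := by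
    conv_rhs => rw [← hspec]
    rw [SimpleGraph.Walk.length_append]
  rw [tree_path_length hG P hP, hlenT] at hlen
  constructor
  · omega
  · intro hle
    have : (P.dropUntil x hx).length = 0 := by omega
    exact (SimpleGraph.Walk.eq_of_length_eq_zero this)

set_option linter.unusedSectionVars false

/-- Every nonempty subtree has a "top" vertex lying on every path from `r` into it. -/
lemma tree_exists_top [Fintype V] (hG : G.IsTree) (r : V) {h : Set V}
    (hc : (G.induce h).Connected) (hne : h.Nonempty) :
    ∃ u ∈ h, ∀ w ∈ h, ∀ P : G.Walk r w, P.IsPath → u ∈ P.support := by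
  classical
  obtain ⟨u, hu, humin⟩ := (Set.toFinite h).toFinset.exists_min_image (G.dist r)
    (by simpa [Set.Finite.toFinset] using hne)
  rw [Set.Finite.mem_toFinset] at hu
  simp only [Set.Finite.mem_toFinset] at humin
  refine ⟨u, hu, ?_⟩
  intro w hw P hP
  -- first vertex of P in h
  have hwsup : w ∈ P.support := P.end_mem_support
  set F : Finset V := P.support.toFinset.filter (· ∈ h) with hF
  have hFne : F.Nonempty := ⟨w, by simp [hF, hwsup, hw]⟩
  obtain ⟨u', hu'F, hu'min⟩ := F.exists_min_image (G.dist r) hFne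
  have hu'P : u' ∈ P.support := by
    have := (Finset.mem_filter.1 hu'F).1; simpa using this
  have hu'h : u' ∈ h := (Finset.mem_filter.1 hu'F).2
  set T : G.Walk r u' := P.takeUntil u' hu'P with hT
  have hTpath : T.IsPath := hP.takeUntil hu'P
  -- any h-vertex on T equals u'
  have hTonly : ∀ x ∈ T.support, x ∈ h → x = u' := by
    intro x hxT hxh
    have hxP : x ∈ P.support := P.support_takeUntil_subset hu'P hxT
    have h1 : G.dist r u' ≤ G.dist r x := hu'min x (by simp [hF, hxP, hxh])
    exact (tree_dist_mono hG T hTpath hxT).2 h1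
  -- path from u' to u inside h
  obtain ⟨Q, hQ⟩ := (hG.existsUnique_path u' u).exists
  have hQh : ∀ x ∈ Q.support, x ∈ h := tree_path_mem hG hc hu'h hu Q hQ
  -- T ++ Q is a path from r to u
  have hW : (T.append Q).IsPath := by
    rw [SimpleGraph.Walk.isPath_def, SimpleGraph.Walk.support_append]
    refine List.Nodup.append hTpath.support_nodup ?_ ?_
    · have := hQ.support_nodup
      rw [Q.support_eq_cons] at this
      exact this.of_cons
    · intro x hxT hxQt
      have hxQ : x ∈ Q.support := by
        rw [Q.support_eq_cons]; exact List.mem_cons_of_mem _ hxQt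
      have hx : x = u' := hTonly x hxT (hQh x hxQ)
      have := hQ.support_nodup
      rw [Q.support_eq_cons, List.nodup_cons] at this
      exact this.1 (hx ▸ hxQt)
  -- length computation forces u = u'
  have hlenW : T.length + Q.length = G.dist r u := by
    rw [← SimpleGraph.Walk.length_append]
    exact tree_path_length hG _ hW
  have hlenT : T.length = G.dist r u' := tree_path_length hG T hTpath
  have hle : G.dist r u ≤ G.dist r u' := humin u' hu'h
  have : Q.length = 0 := by omega
  have : u' = u := SimpleGraph.Walk.eq_of_length_eq_zero this
  rwa [← this]

/-- Given subtrees with a common vertex, the deepest top lies in all of them. -/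
lemma tree_exists_pivot [Fintype V] (hG : G.IsTree) (r : V) {n : ℕ} (h : Fin n → Set V)
    (top : Fin n → V)
    (htop1 : ∀ i, top i ∈ h i)
    (htop2 : ∀ i, ∀ w ∈ h i, ∀ P : G.Walk r w, P.IsPath → top i ∈ P.support)
    (hconn : ∀ i, (G.induce (h i)).Connected)
    (S : Finset (Fin n)) (hS : S.Nonempty) {v : V} (hv : ∀ i ∈ S, v ∈ h i) :
    ∃ i ∈ S, ∀ j ∈ S, top i ∈ h j := by
  classical
  obtain ⟨i0, hi0S, hi0max⟩ := S.exists_max_image (fun i => G.dist r (top i)) hS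
  refine ⟨i0, hi0S, ?_⟩
  intro j hjS
  obtain ⟨P, hP⟩ := (hG.existsUnique_path r v).exists
  have ha : top i0 ∈ P.support := htop2 i0 v (hv i0 hi0S) P hP
  have hb : top j ∈ P.support := htop2 j v (hv j hjS) P hP
  set D : G.Walk (top j) v := P.dropUntil (top j) hb with hD
  have hDpath : D.IsPath := hP.dropUntil hb
  have hDh : ∀ x ∈ D.support, x ∈ h j :=
    tree_path_mem hG (hconn j) (htop1 j) (hv j hjS) D hDpath
  -- show top i0 ∈ D.support
  have hsplit : top i0 ∈ (P.takeUntil (top j) hb).support ∨ top i0 ∈ D.support := by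
    rw [← SimpleGraph.Walk.mem_support_append_iff, P.take_spec hb]
    exact ha
  rcases hsplit with hT | hDmem
  · have hTpath := hP.takeUntil hb
    have h1 := (tree_dist_mono hG _ hTpath hT).2 (hi0max j hjS)
    rw [h1]
    exact htop1 j
  · exact hDh _ hDmem

end SubtreeAux

/-- If `h 1, …, h n` are subtrees of a finite tree `G` and at least `k` of the
`p`-element index subsets have a commonly shared vertex, then some vertex lies
in at least `((p-1)! · k/n)^{1/(p-1)} + 1` of the subtrees. -/

theorem subtree_lemma {V : Type*} [Fintype V] (G : SimpleGraph V) (hG : G.IsTree)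
    (p n k : ℕ) (hp : 2 ≤ p) (hn : 1 ≤ n) (hk : 1 ≤ k)
    (h : Fin n → Set V)
    (hne : ∀ i, (h i).Nonempty)
    (hconn : ∀ i, (G.induce (h i)).Connected)
    (hcount : k ≤ Nat.card {S : Finset (Fin n) // S.card = p ∧ (⋂ i ∈ S, h i).Nonempty}) :
    ∃ v : V, ((p - 1).factorial * (k : ℝ) / n) ^ (1 / ((p : ℝ) - 1)) + 1
      ≤ Nat.card {i : Fin n // v ∈ h i} := by
  classical
  obtain ⟨r, hr0⟩ := hne ⟨0, hn⟩
  choose top htop1 htop2 using fun i => tree_exists_top (G := G) hG r (hconn i) (hne i)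
  -- degree function and its max
  set d : V → ℕ := fun v => (Finset.univ.filter (fun i => v ∈ h i)).card with hd
  obtain ⟨vm, _, hvmax⟩ := Finset.exists_max_image Finset.univ d ⟨r, Finset.mem_univ r⟩
  set m : ℕ := d vm with hm
  have hmax : ∀ v, d v ≤ m := fun v => hvmax v (Finset.mem_univ v)
  -- the good finset
  set good : Finset (Finset (Fin n)) :=
    Finset.univ.filter (fun S => S.card = p ∧ (⋂ i ∈ S, h i).Nonempty) with hgood
  have hcount' : k ≤ good.card := by
    rwa [Nat.card_eq_fintype_card, Fintype.card_subtype] at hcount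
  have hgood_mem : ∀ S ∈ good, S.card = p ∧ (⋂ i ∈ S, h i).Nonempty := by
    intro S hS; simpa [hgood] using (Finset.mem_filter.1 hS).2
  -- m ≥ p
  have hgoodne : good.Nonempty := Finset.card_pos.1 (lt_of_lt_of_le hk hcount')
  have hmp : p ≤ m := by
    obtain ⟨S, hS⟩ := hgoodne
    obtain ⟨hcard, v, hv⟩ := hgood_mem S hS
    have hsub : S ⊆ Finset.univ.filter (fun i => v ∈ h i) := by
      intro i hi
      simp only [Finset.mem_filter, Finset.mem_univ, true_and]
      exact Set.mem_iInter₂.1 hv i hi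
    calc p = S.card := hcard.symm
      _ ≤ d v := Finset.card_le_card hsub
      _ ≤ m := hmax v
  -- counting: good.card ≤ n * choose (m-1) (p-1)
  set t : ℕ := m - 1 with ht
  have hkey : ∀ S ∈ good, ∃ i, i ∈ S ∧ ∀ j ∈ S, top i ∈ h j := by
    intro S hS
    obtain ⟨hcard, v, hv⟩ := hgood_mem S hS
    have hSne : S.Nonempty := Finset.card_pos.1 (by omega)
    obtain ⟨i, hiS, hi⟩ := tree_exists_pivot hG r h top htop1 htop2 hconn S hSne
      (fun i hi => Set.mem_iInter₂.1 hv i hi)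
    exact ⟨i, hiS, hi⟩
  have : Nonempty (Fin n) := ⟨⟨0, hn⟩⟩
  choose! pick hp1 hp2 using hkey
  set A : Fin n → Finset (Fin n) :=
    fun i => (Finset.univ.filter (fun j => top i ∈ h j)).erase i with hA
  have hAcard : ∀ i, (A i).card ≤ t := by
    intro i
    have hi : i ∈ Finset.univ.filter (fun j => top i ∈ h j) := by
      simp [htop1 i]
    rw [hA]
    simp only
    rw [Finset.card_erase_of_mem hi]
    exact Nat.sub_le_sub_right (hmax (top i)) 1
  set F : Finset (Fin n × Finset (Fin n)) :=
    Finset.univ.biUnion (fun i => ((A i).powersetCard (p-1)).image (fun T => (i, T))) with hF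
  have hmaps : ∀ S ∈ good, (pick S, S.erase (pick S)) ∈ F := by
    intro S hS
    obtain ⟨hcard, -⟩ := hgood_mem S hS
    rw [hF, Finset.mem_biUnion]
    refine ⟨pick S, Finset.mem_univ _, Finset.mem_image.2 ⟨S.erase (pick S), ?_, rfl⟩⟩
    rw [Finset.mem_powersetCard]
    constructor
    · intro j hj
      obtain ⟨hne', hjS⟩ := Finset.mem_erase.1 hj
      exact Finset.mem_erase.2 ⟨hne', by simp [hp2 S hS j hjS]⟩
    · rw [Finset.card_erase_of_mem (hp1 S hS), hcard]
  have hinj : Set.InjOn (fun S => (pick S, S.erase (pick S))) good := by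
    intro S1 h1 S2 h2 heq
    simp only [Prod.mk.injEq] at heq
    rw [← Finset.insert_erase (hp1 S1 (Finset.mem_coe.1 h1)), heq.2, heq.1,
      Finset.insert_erase (hp1 S2 (Finset.mem_coe.1 h2))]
  have hcard1 : good.card ≤ F.card := Finset.card_le_card_of_injOn _ hmaps hinj
  have hcard2 : F.card ≤ n * t.choose (p-1) := by
    calc F.card ≤ ∑ i : Fin n, (((A i).powersetCard (p-1)).image (fun T => (i, T))).card :=
          Finset.card_biUnion_le
      _ ≤ ∑ i : Fin n, t.choose (p-1) := by
          refine Finset.sum_le_sum fun i _ => ?_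
          calc (((A i).powersetCard (p-1)).image (fun T => (i, T))).card
              ≤ ((A i).powersetCard (p-1)).card := Finset.card_image_le
            _ = (A i).card.choose (p-1) := Finset.card_powersetCard _ _
            _ ≤ t.choose (p-1) := Nat.choose_le_choose _ (hAcard i)
      _ = n * t.choose (p-1) := by simp [Finset.sum_const, Finset.card_univ, mul_comm]
  have hknat : k ≤ n * t.choose (p-1) := hcount'.trans (hcard1.trans hcard2)
  -- real arithmetic
  refine ⟨vm, ?_⟩
  have hcardeq : Nat.card {i : Fin n // vm ∈ h i} = m := by
    rw [Nat.card_eq_fintype_card, Fintype.card_subtype]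
  rw [hcardeq]
  have hnR : (0:ℝ) < n := by exact_mod_cast hn
  have hfact : (p-1).factorial * t.choose (p-1) ≤ t ^ (p-1) := by
    rw [← Nat.descFactorial_eq_factorial_mul_choose]
    exact Nat.descFactorial_le_pow t (p-1)
  have hstep : ((p - 1).factorial * (k : ℝ) / n) ≤ (t:ℝ) ^ (p-1) := by
    rw [div_le_iff₀ hnR]
    have : (p-1).factorial * k ≤ t ^ (p-1) * n := by
      calc (p-1).factorial * k ≤ (p-1).factorial * (n * t.choose (p-1)) :=
            Nat.mul_le_mul_left _ hknat
        _ = ((p-1).factorial * t.choose (p-1)) * n := by ring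
        _ ≤ t ^ (p-1) * n := Nat.mul_le_mul_right _ hfact
    exact_mod_cast this
  have hx0 : (0:ℝ) ≤ (p - 1).factorial * (k : ℝ) / n := by positivity
  have hpe : ((p:ℝ) - 1) = ((p-1 : ℕ) : ℝ) := by
    have : (1:ℕ) ≤ p := by omega
    push_cast [this]; ring
  have he0 : (0:ℝ) < 1 / ((p:ℝ) - 1) := by
    rw [hpe]
    have : 0 < p - 1 := by omega
    positivity
  have hrpow : ((p - 1).factorial * (k : ℝ) / n) ^ (1 / ((p : ℝ) - 1)) ≤ (t:ℝ) := by
    have h1 : ((p - 1).factorial * (k : ℝ) / n) ^ (1 / ((p : ℝ) - 1))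
        ≤ ((t:ℝ) ^ (p-1)) ^ (1 / ((p : ℝ) - 1)) :=
      Real.rpow_le_rpow hx0 hstep he0.le
    have ht0 : (0:ℝ) ≤ (t:ℝ) := Nat.cast_nonneg t
    have h2 : ((t:ℝ) ^ (p-1)) ^ (1 / ((p : ℝ) - 1)) = (t:ℝ) := by
      rw [← Real.rpow_natCast (t:ℝ) (p-1), ← Real.rpow_mul ht0, ← hpe]
      rw [mul_one_div, div_self (by rw [hpe]; exact_mod_cast (by omega : p - 1 ≠ 0)), Real.rpow_one]
    rwa [h2] at h1
  have hm1 : (t:ℝ) + 1 = (m:ℝ) := by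
    have : 1 ≤ m := by omega
    rw [ht]; push_cast [this]; ring
  linarith
end
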